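/- For every integer k ≥ 2, the number of integers n with 2^k ≤ n < 2^{k+1} and ‖n‖ > 5k/2 + √(k · log k) is at most (2/k²)·2^k, where log denotes the natural logarithm. -/

import Mathlib

/-- Arithmetic expressions built from 1's using addition and multiplication. -/
inductive Expr : Type where
  | one : Expr
  | add : Expr → Expr → Expr
  | mul : Expr → Expr → Expr

/-- The value of an expression. -/
def Expr.val : Expr → ℕ
  | .one => 1
  | .add a b => a.val + b.val
  | .mul a b => a.val * b.val

/-- The number of 1's used in an expression. -/
def Expr.cost : Expr → ℕ
  | .one => 1
  | .add a b => a.cost + b.cost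
  | .mul a b => a.cost + b.cost

/-- The integer complexity ‖n‖: the least number of 1's needed to write `n`
as an expression built from 1's using only addition and multiplication. -/
noncomputable def cplx (n : ℕ) : ℕ :=
  sInf {k | ∃ e : Expr, e.val = n ∧ e.cost = k}

lemma exists_expr (n : ℕ) (hn : 1 ≤ n) : ∃ e : Expr, e.val = n := by
  induction n with
  | zero => omega
  | succ m ih =>
    rcases Nat.eq_or_lt_of_le hn with h | h
    · exact ⟨Expr.one, by simp [Expr.val, ← h]⟩
    · obtain ⟨e, he⟩ := ih (by omega)
      exact ⟨Expr.add e Expr.one, by simp [Expr.val, he]⟩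

lemma cplx_le_of_expr {n : ℕ} (e : Expr) (he : e.val = n) : cplx n ≤ e.cost :=
  Nat.sInf_le ⟨e, he, rfl⟩

lemma cplx_spec (n : ℕ) (hn : 1 ≤ n) : ∃ e : Expr, e.val = n ∧ e.cost = cplx n := by
  obtain ⟨e, he⟩ := exists_expr n hn
  have : {k | ∃ e : Expr, e.val = n ∧ e.cost = k}.Nonempty := ⟨e.cost, e, he, rfl⟩
  exact Nat.sInf_mem this

lemma cplx_le (n : ℕ) (hn : 1 ≤ n) :
    cplx n ≤ 2 * Nat.log 2 n + (Nat.digits 2 n).sum := by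
  induction n using Nat.strong_induction_on with
  | _ n ih =>
    rcases Nat.lt_or_ge n 2 with h2 | h2
    · interval_cases n
      · simpa [Expr.val, Expr.cost] using cplx_le_of_expr Expr.one rfl
    · have hq1 : 1 ≤ n / 2 := Nat.one_le_div_iff (by norm_num) |>.2 h2
      have hqn : n / 2 < n := Nat.div_lt_self (by omega) (by norm_num)
      obtain ⟨e, hev, hec⟩ := cplx_spec (n / 2) hq1
      have hb : n % 2 < 2 := Nat.mod_lt _ (by norm_num)
      -- expression for n
      have key : cplx n ≤ cplx (n / 2) + 2 + n % 2 := by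
        rcases Nat.lt_or_ge (n % 2) 1 with hb0 | hb1
        · have hb0' : n % 2 = 0 := by omega
          have h := cplx_le_of_expr (Expr.mul e (Expr.add Expr.one Expr.one))
            (show (Expr.mul e (Expr.add Expr.one Expr.one)).val = n by
              simp [Expr.val, hev]; omega)
          simp [Expr.cost, hec] at h
          omega
        · have hb1' : n % 2 = 1 := by omega
          have h := cplx_le_of_expr (Expr.add (Expr.mul e (Expr.add Expr.one Expr.one)) Expr.one)
            (show (Expr.add (Expr.mul e (Expr.add Expr.one Expr.one)) Expr.one).val = n by
              simp [Expr.val, hev]; omega)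
          simp [Expr.cost, hec] at h
          omega
      have hlog : Nat.log 2 n = Nat.log 2 (n / 2) + 1 := by
        rw [Nat.log_div_base]
        have := Nat.log_pos (b := 2) (by norm_num) h2
        omega
      have hdig : (Nat.digits 2 n).sum = n % 2 + (Nat.digits 2 (n / 2)).sum := by
        rw [Nat.digits_def' (by norm_num : 1 < 2) (by omega)]
        simp
      have := ih (n / 2) hqn (by omega)
      omega


lemma popcount_eq (K : ℕ) : ∀ n : ℕ, n < 2 ^ K →
    (Nat.digits 2 n).sum = ((Finset.range K).filter (fun i => n.testBit i)).card := by
  induction K with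
  | zero => intro n hn; interval_cases n; simp
  | succ K ih =>
    intro n hn
    rcases Nat.eq_zero_or_pos n with rfl | hpos
    · simp [Nat.zero_testBit]
    · have hdig : (Nat.digits 2 n).sum = n % 2 + (Nat.digits 2 (n / 2)).sum := by
        rw [Nat.digits_def' (by norm_num : 1 < 2) (by omega)]; simp
      have hq : n / 2 < 2 ^ K := by
        have : n < 2 ^ K * 2 := by rw [pow_succ] at hn; omega
        omega
      have IH := ih (n / 2) hq
      rw [Finset.card_filter, Finset.sum_range_succ']
      simp only [Nat.testBit_add_one, Nat.testBit_zero]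
      rw [← Finset.card_filter]
      rw [hdig, IH]
      rcases Nat.mod_two_eq_zero_or_one n with h | h <;> simp [h] <;> omega

lemma chernoff (k m : ℕ) (l : ℝ) (hl : 1 ≤ l) :
    (∑ j ∈ Finset.Icc m k, (k.choose j : ℝ)) * l ^ m ≤ (1 + l) ^ k := by
  have h0 : (0:ℝ) ≤ l := by linarith
  calc (∑ j ∈ Finset.Icc m k, (k.choose j : ℝ)) * l ^ m
      = ∑ j ∈ Finset.Icc m k, (k.choose j : ℝ) * l ^ m := by rw [Finset.sum_mul]
    _ ≤ ∑ j ∈ Finset.Icc m k, (k.choose j : ℝ) * l ^ j := by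
        apply Finset.sum_le_sum
        intro j hj
        have := (Finset.mem_Icc.1 hj).1
        exact mul_le_mul_of_nonneg_left (pow_le_pow_right₀ hl this) (by positivity)
    _ ≤ ∑ j ∈ Finset.range (k + 1), (k.choose j : ℝ) * l ^ j := by
        apply Finset.sum_le_sum_of_subset_of_nonneg
        · intro j hj
          simp only [Finset.mem_Icc] at hj
          simp [Finset.mem_range]; omega
        · intros; positivity
    _ = (1 + l) ^ k := by
        rw [add_comm (1:ℝ) l, add_pow]
        apply Finset.sum_congr rfl
        intro j hj
        ring


lemma count_le (k m : ℕ) :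
    ((Finset.Ico (2^k) (2^(k+1))).filter (fun n => m + 1 ≤ (Nat.digits 2 n).sum)).card
      ≤ ∑ j ∈ Finset.Icc m k, k.choose j := by
  classical
  set B := (Finset.range k).powerset.filter (fun A => m ≤ A.card) with hB
  have hcard : B.card = ∑ j ∈ Finset.Icc m k, k.choose j := by
    have : B = (Finset.Icc m k).biUnion (fun j => Finset.powersetCard j (Finset.range k)) := by
      ext A
      simp only [hB, Finset.mem_filter, Finset.mem_powerset, Finset.mem_biUnion,
        Finset.mem_Icc, Finset.mem_powersetCard]
      constructor
      · rintro ⟨hsub, hm⟩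
        exact ⟨A.card, ⟨hm, by simpa using Finset.card_le_card hsub⟩, hsub, rfl⟩
      · rintro ⟨j, ⟨hmj, hjk⟩, hsub, rfl⟩
        exact ⟨hsub, hmj⟩
    rw [this, Finset.card_biUnion]
    · apply Finset.sum_congr rfl
      intro j _
      simp [Finset.card_powersetCard]
    · intro x _ y _ hxy
      apply Finset.disjoint_left.2
      intro A hA hA'
      simp only [Finset.mem_powersetCard] at hA hA'
      exact hxy (hA.2 ▸ hA'.2 ▸ rfl)
  rw [← hcard]
  apply Finset.card_le_card_of_injOn (fun n => (Finset.range k).filter (fun i => n.testBit i))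
  · intro n hn
    simp only [Finset.mem_coe, Finset.mem_filter, Finset.mem_Ico] at hn
    obtain ⟨⟨h1, h2⟩, h3⟩ := hn
    simp only [hB, Finset.mem_coe, Finset.mem_filter, Finset.mem_powerset]
    refine ⟨Finset.filter_subset _ _, ?_⟩
    have hpc := popcount_eq (k+1) n h2
    have hsplit : ((Finset.range (k+1)).filter (fun i => n.testBit i)).card
        ≤ ((Finset.range k).filter (fun i => n.testBit i)).card + 1 := by
      rw [Finset.range_add_one, Finset.filter_insert]
      split
      · rw [Finset.card_insert_of_notMem (by simp)]
      · omega
    omega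
  · intro n hn n' hn' heq
    simp only [Finset.mem_coe, Finset.mem_filter, Finset.mem_Ico] at hn hn'
    obtain ⟨⟨hn1, hn2⟩, -⟩ := hn
    obtain ⟨⟨hn1', hn2'⟩, -⟩ := hn'
    have heq2 : ∀ i : ℕ, i < k → n.testBit i = n'.testBit i := by
      intro i hik
      have h3 : (i ∈ (Finset.range k).filter (fun j => n.testBit j)) ↔
          (i ∈ (Finset.range k).filter (fun j => n'.testBit j)) := by
        constructor <;> intro h
        · exact (Finset.ext_iff.1 heq i).1 h
        · exact (Finset.ext_iff.1 heq i).2 h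
      simp only [Finset.mem_filter, Finset.mem_range] at h3
      by_cases h : n.testBit i <;> by_cases h' : n'.testBit i <;> simp_all
    apply Nat.eq_of_testBit_eq
    intro i
    rcases lt_trichotomy i k with hik | rfl | hik
    · exact heq2 i hik
    · have ht : ∀ x : ℕ, 2^i ≤ x → x < 2^(i+1) → x.testBit i = true := by
        intro x hx1 hx2
        rw [Nat.testBit_eq_decide_div_mod_eq]
        have hdiv : x / 2^i = 1 := by
          have h2 : x / 2^i < 2 := by
            rw [Nat.div_lt_iff_lt_mul (Nat.pow_pos (by norm_num))]
            rw [pow_succ] at hx2; omega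
          have h1 : 1 ≤ x / 2^i := (Nat.one_le_div_iff (Nat.pow_pos (by norm_num))).2 hx1
          omega
        simp [hdiv]
      rw [ht n hn1 hn2, ht n' hn1' hn2']
    · have h1 : n.testBit i = false := Nat.testBit_lt_two_pow
        (lt_of_lt_of_le hn2 (Nat.pow_le_pow_right (by norm_num) (by omega)))
      have h2 : n'.testBit i = false := Nat.testBit_lt_two_pow
        (lt_of_lt_of_le hn2' (Nat.pow_le_pow_right (by norm_num) (by omega)))
      rw [h1, h2]


lemma reduction (k m : ℕ) (hk : 2 ≤ k)
    (hm : (m : ℝ) ≤ k / 2 + Real.sqrt (k * Real.log k)) :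
    ({n : ℕ | 2 ^ k ≤ n ∧ n < 2 ^ (k + 1) ∧
        5 * (k : ℝ) / 2 + Real.sqrt (k * Real.log k) < (cplx n : ℝ)}).ncard
      ≤ ∑ j ∈ Finset.Icc m k, k.choose j := by
  classical
  set S := (Finset.Ico (2^k) (2^(k+1))).filter (fun n => m + 1 ≤ (Nat.digits 2 n).sum) with hS
  have hsub : {n : ℕ | 2 ^ k ≤ n ∧ n < 2 ^ (k + 1) ∧
      5 * (k : ℝ) / 2 + Real.sqrt (k * Real.log k) < (cplx n : ℝ)} ⊆ ↑S := by
    intro n hn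
    obtain ⟨h1, h2, h3⟩ := hn
    have hn1 : 1 ≤ n := le_trans (Nat.one_le_two_pow) h1
    have hlog : Nat.log 2 n = k := Nat.log_eq_of_pow_le_of_lt_pow h1 h2
    have hcle : cplx n ≤ 2 * k + (Nat.digits 2 n).sum := by
      have := cplx_le n hn1; rwa [hlog] at this
    have hcler : (cplx n : ℝ) ≤ 2 * k + ((Nat.digits 2 n).sum : ℝ) := by
      exact_mod_cast hcle
    have hsum : (m : ℝ) < ((Nat.digits 2 n).sum : ℝ) := by
      have : 5 * (k : ℝ) / 2 + Real.sqrt (k * Real.log k) < 2 * k + ((Nat.digits 2 n).sum : ℝ) :=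
        lt_of_lt_of_le h3 hcler
      linarith
    have : m + 1 ≤ (Nat.digits 2 n).sum := by exact_mod_cast Nat.lt_iff_add_one_le.1 (by exact_mod_cast hsum)
    simp [hS, Finset.mem_filter, Finset.mem_Ico, h1, h2, this]
    omega
  calc ({n : ℕ | _ ∧ _ ∧ _}).ncard ≤ (↑S : Set ℕ).ncard :=
        Set.ncard_le_ncard hsub (S.finite_toSet)
    _ = S.card := Set.ncard_coe_finset S
    _ ≤ _ := count_le k m


lemma hm_cert (k a m : ℕ) (hk : 1 ≤ k) (hmk : k ≤ 2 * m)
    (h1 : 2 ^ a ≤ k ^ 16)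
    (h2 : 10 ^ 10 * 16 * (2 * m - k) ^ 2 ≤ 4 * 6931471803 * (k * a)) :
    (m : ℝ) ≤ k / 2 + Real.sqrt (k * Real.log k) := by
  have hk0 : (0:ℝ) < k := by exact_mod_cast hk
  have hlog : (a : ℝ) * Real.log 2 ≤ 16 * Real.log k := by
    have h1' : (2:ℝ) ^ a ≤ (k:ℝ) ^ 16 := by exact_mod_cast h1
    have := Real.log_le_log (by positivity) h1'
    rwa [Real.log_pow, Real.log_pow] at this
  have hl2 : (0.6931471803 : ℝ) ≤ Real.log 2 := le_of_lt Real.log_two_gt_d9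
  have hd : ((2 * m - k : ℕ) : ℝ) = 2 * m - k := by
    push_cast [Nat.cast_sub hmk]; ring
  have h2' : ((2:ℝ) * m - k) ^ 2 ≤ 4 * ((k:ℝ) * Real.log k) := by
    have h2r : (10:ℝ) ^ 10 * 16 * ((2 * m - k : ℕ) : ℝ) ^ 2
        ≤ 4 * 6931471803 * ((k:ℝ) * a) := by exact_mod_cast h2
    rw [hd] at h2r
    have ha0 : (0:ℝ) ≤ (a:ℝ) := Nat.cast_nonneg a
    nlinarith [mul_le_mul_of_nonneg_left hlog (le_of_lt hk0),
      mul_le_mul_of_nonneg_left hl2 (mul_nonneg (le_of_lt hk0) ha0)]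
  have hs : (m:ℝ) - k / 2 ≤ Real.sqrt (k * Real.log k) := by
    rcases le_or_gt ((m:ℝ) - k/2) 0 with h | h
    · exact le_trans h (Real.sqrt_nonneg _)
    · rw [Real.le_sqrt' h]
      nlinarith
  linarith

lemma finish_from_sum (k m : ℕ) (hk : 2 ≤ k)
    (hm : (m : ℝ) ≤ k / 2 + Real.sqrt (k * Real.log k))
    (hsum : (∑ j ∈ Finset.Icc m k, (k.choose j : ℝ)) ≤ 2 ^ (k+1) / (k:ℝ) ^ 2) :
    (Set.ncard {n : ℕ | 2 ^ k ≤ n ∧ n < 2 ^ (k + 1) ∧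
        5 * (k : ℝ) / 2 + Real.sqrt (k * Real.log k) < (cplx n : ℝ)} : ℝ)
      ≤ 2 / (k : ℝ) ^ 2 * 2 ^ k := by
  have h1 := reduction k m hk hm
  have h1' : ((Set.ncard {n : ℕ | 2 ^ k ≤ n ∧ n < 2 ^ (k + 1) ∧
      5 * (k : ℝ) / 2 + Real.sqrt (k * Real.log k) < (cplx n : ℝ)}) : ℝ)
      ≤ (∑ j ∈ Finset.Icc m k, (k.choose j : ℝ)) := by
    push_cast
    exact_mod_cast h1
  have : (2:ℝ) ^ (k+1) / (k:ℝ) ^ 2 = 2 / (k:ℝ) ^ 2 * 2 ^ k := by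
    rw [pow_succ]; ring
  linarith

lemma small_exact (k a m : ℕ) (hk : 2 ≤ k) (hmk : k ≤ 2 * m)
    (h1 : 2 ^ a ≤ k ^ 16)
    (h2 : 10 ^ 10 * 16 * (2 * m - k) ^ 2 ≤ 4 * 6931471803 * (k * a))
    (h3 : (∑ j ∈ Finset.Icc m k, k.choose j) * k ^ 2 ≤ 2 ^ (k+1)) :
    (Set.ncard {n : ℕ | 2 ^ k ≤ n ∧ n < 2 ^ (k + 1) ∧
        5 * (k : ℝ) / 2 + Real.sqrt (k * Real.log k) < (cplx n : ℝ)} : ℝ)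
      ≤ 2 / (k : ℝ) ^ 2 * 2 ^ k := by
  apply finish_from_sum k m hk (hm_cert k a m (by omega) hmk h1 h2)
  rw [le_div_iff₀ (by positivity : (0:ℝ) < (k:ℝ)^2)]
  have : ((∑ j ∈ Finset.Icc m k, k.choose j) * k ^ 2 : ℕ) ≤ ((2:ℕ) ^ (k+1)) := h3
  exact_mod_cast this

lemma small_cher (k a m p q : ℕ) (hk : 2 ≤ k) (hmk : k ≤ 2 * m)
    (hq : 1 ≤ q) (hpq : q ≤ p)
    (h1 : 2 ^ a ≤ k ^ 16)
    (h2 : 10 ^ 10 * 16 * (2 * m - k) ^ 2 ≤ 4 * 6931471803 * (k * a))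
    (h3 : k ^ 2 * (p + q) ^ k * q ^ m ≤ 2 ^ (k+1) * p ^ m * q ^ k) :
    (Set.ncard {n : ℕ | 2 ^ k ≤ n ∧ n < 2 ^ (k + 1) ∧
        5 * (k : ℝ) / 2 + Real.sqrt (k * Real.log k) < (cplx n : ℝ)} : ℝ)
      ≤ 2 / (k : ℝ) ^ 2 * 2 ^ k := by
  apply finish_from_sum k m hk (hm_cert k a m (by omega) hmk h1 h2)
  have hq0 : (0:ℝ) < q := by exact_mod_cast hq
  have hp0 : (0:ℝ) < p := lt_of_lt_of_le hq0 (by exact_mod_cast hpq)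
  have hl1 : (1:ℝ) ≤ (p:ℝ)/(q:ℝ) := (one_le_div hq0).2 (by exact_mod_cast hpq)
  have hcher := chernoff k m ((p:ℝ)/(q:ℝ)) hl1
  have hqk : (0:ℝ) < (q:ℝ)^k := by positivity
  have hqm : (0:ℝ) < (q:ℝ)^m := by positivity
  have hpm : (0:ℝ) < (p:ℝ)^m := by positivity
  have h3' : (k:ℝ) ^ 2 * ((p:ℝ) + q) ^ k * (q:ℝ) ^ m ≤ 2 ^ (k+1) * (p:ℝ) ^ m * (q:ℝ) ^ k := by
    exact_mod_cast h3
  have hstep : ((1:ℝ) + (p:ℝ)/(q:ℝ)) ^ k ≤ 2 ^ (k+1) / (k:ℝ)^2 * ((p:ℝ)/(q:ℝ)) ^ m := by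
    have hexp : ((1:ℝ) + (p:ℝ)/(q:ℝ)) ^ k = ((p:ℝ) + q)^k / (q:ℝ)^k := by
      rw [show (1:ℝ) + (p:ℝ)/(q:ℝ) = ((p:ℝ) + q) / q by field_simp; ring, div_pow]
    rw [hexp, div_pow, div_le_iff₀ hqk, ← sub_nonneg]
    have hk2 : (0:ℝ) < (k:ℝ)^2 := by positivity
    have expand : 2 ^ (k+1) / (k:ℝ)^2 * ((p:ℝ)^m / (q:ℝ)^m) * (q:ℝ)^k - ((p:ℝ)+q)^k
        = (2 ^ (k+1) * (p:ℝ)^m * (q:ℝ)^k - (k:ℝ)^2 * ((p:ℝ)+q)^k * (q:ℝ)^m) / ((k:ℝ)^2 * (q:ℝ)^m) := by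
      field_simp
    rw [expand]
    apply div_nonneg (by linarith) (by positivity)
  have hfin : (∑ j ∈ Finset.Icc m k, (k.choose j : ℝ)) * ((p:ℝ)/(q:ℝ))^m
      ≤ 2 ^ (k+1) / (k:ℝ)^2 * ((p:ℝ)/(q:ℝ)) ^ m := le_trans hcher hstep
  have hppow : (0:ℝ) < ((p:ℝ)/(q:ℝ))^m := by positivity
  exact le_of_mul_le_mul_right hfin hppow

lemma large_numeric (k : ℕ) (hk : 183 ≤ k) :
    4 * Real.sqrt (k * Real.log k) ≤ k * Real.log 2 + 2 := by
  have hk0 : (183:ℝ) ≤ (k:ℝ) := by exact_mod_cast hk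
  have hkpos : (0:ℝ) < k := by linarith
  set L := Real.log 2 with hL
  have hL1 : (0.6931471803:ℝ) ≤ L := le_of_lt Real.log_two_gt_d9
  have hL2 : L ≤ (0.6931471808:ℝ) := le_of_lt Real.log_two_lt_d9
  have hlogk : Real.log k ≤ 8 * L + (k:ℝ)/183 - 1 := by
    have h1 : Real.log ((k:ℝ)/183) ≤ (k:ℝ)/183 - 1 := by
      have := Real.log_le_sub_one_of_pos (show (0:ℝ) < (k:ℝ)/183 by positivity)
      linarith
    have h2 : Real.log (k:ℝ) = Real.log ((k:ℝ)/183) + Real.log 183 := by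
      rw [← Real.log_mul (by positivity) (by norm_num)]
      norm_num
    have h3 : Real.log (183:ℝ) ≤ Real.log (256:ℝ) :=
      Real.log_le_log (by norm_num) (by norm_num)
    have h4 : Real.log (256:ℝ) = 8 * L := by
      rw [show (256:ℝ) = 2^8 by norm_num, Real.log_pow]
      push_cast; ring
    linarith
  have hklogk : (k:ℝ) * Real.log k ≤ ((k * L + 2)/4)^2 := by
    have hlogk' : (k:ℝ) * Real.log k ≤ k * (8 * L + (k:ℝ)/183 - 1) := by
      apply mul_le_mul_of_nonneg_left hlogk (le_of_lt hkpos)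
    have : (k:ℝ) * (8 * L + (k:ℝ)/183 - 1) ≤ ((k * L + 2)/4)^2 := by
      nlinarith [sq_nonneg ((k:ℝ) - 183), sq_nonneg ((k:ℝ)*L - 183*L), mul_le_mul_of_nonneg_left hL1 (le_of_lt hkpos), mul_le_mul_of_nonneg_left hL2 (le_of_lt hkpos)]
    linarith
  have hs : Real.sqrt ((k:ℝ) * Real.log k) ≤ (k * L + 2)/4 := by
    have hnn : (0:ℝ) ≤ (k * L + 2)/4 := by nlinarith
    calc Real.sqrt ((k:ℝ) * Real.log k) ≤ Real.sqrt (((k * L + 2)/4)^2) :=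
          Real.sqrt_le_sqrt hklogk
      _ = (k * L + 2)/4 := Real.sqrt_sq hnn
  linarith

set_option maxHeartbeats 1000000 in
lemma large_case (k : ℕ) (hk : 183 ≤ k) :
    (Set.ncard {n : ℕ | 2 ^ k ≤ n ∧ n < 2 ^ (k + 1) ∧
        5 * (k : ℝ) / 2 + Real.sqrt (k * Real.log k) < (cplx n : ℝ)} : ℝ)
      ≤ 2 / (k : ℝ) ^ 2 * 2 ^ k := by
  have hk0 : (183:ℝ) ≤ (k:ℝ) := by exact_mod_cast hk
  have hkpos : (0:ℝ) < k := by linarith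
  have hlogkpos : (0:ℝ) < Real.log k := Real.log_pos (by linarith)
  have hklogk : (0:ℝ) ≤ (k:ℝ) * Real.log k := by positivity
  set t := Real.sqrt ((k:ℝ) * Real.log k) with ht
  have ht2 : t^2 = (k:ℝ) * Real.log k := Real.sq_sqrt hklogk
  have ht1 : 1 ≤ t := by
    rw [ht, show (1:ℝ) = Real.sqrt 1 by simp]
    apply Real.sqrt_le_sqrt
    nlinarith [Real.log_two_gt_d9, Real.log_le_log (by norm_num : (0:ℝ) < 2) (show (2:ℝ) ≤ (k:ℝ) by linarith)]
  set m := Nat.floor ((k:ℝ)/2 + t) with hm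
  have hmhi : (m:ℝ) ≤ (k:ℝ)/2 + t := Nat.floor_le (by positivity)
  have hmlow : (k:ℝ)/2 + t - 1 ≤ (m:ℝ) := by
    have := Nat.lt_floor_add_one ((k:ℝ)/2 + t)
    push_cast at this ⊢
    linarith
  set u := 2*(t-1)/(k:ℝ) with hu
  have hu0 : 0 ≤ u := by
    apply div_nonneg (by linarith) (by linarith)
  set l := Real.exp (2*u) with hl
  have hl1 : 1 ≤ l := Real.one_le_exp (by linarith)
  apply finish_from_sum k m (by omega) hmhi
  have hcher := chernoff k m l hl1
  -- key : (1+l)^k ≤ 2^(k+1)/k^2 * l^m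
  have hkey : (1+l)^k ≤ 2^(k+1)/(k:ℝ)^2 * l^m := by
    have hLpos : (0:ℝ) < (1+l)^k := by positivity
    have hRpos : (0:ℝ) < 2^(k+1)/(k:ℝ)^2 * l^m := by positivity
    rw [← Real.log_le_log_iff hLpos hRpos]
    have hcosh : 1 + l = 2 * Real.exp u * Real.cosh u := by
      have e1 : Real.exp (2*u) = Real.exp u * Real.exp u := by
        rw [← Real.exp_add]; ring_nf
      have e2 : Real.exp u * Real.exp (-u) = 1 := by
        rw [← Real.exp_add]; simp
      rw [hl, Real.cosh_eq, e1]
      nlinarith [e2]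
    have hlogL : Real.log ((1+l)^k) ≤ (k:ℝ) * (Real.log 2 + u + u^2/2) := by
      rw [Real.log_pow]
      apply mul_le_mul_of_nonneg_left _ (Nat.cast_nonneg k)
      rw [hcosh, Real.log_mul (by positivity) (by positivity),
        Real.log_mul (by norm_num) (Real.exp_ne_zero u), Real.log_exp]
      have : Real.log (Real.cosh u) ≤ u^2/2 := by
        have h1 := Real.cosh_le_exp_half_sq u
        have := Real.log_le_log (Real.cosh_pos u) h1
        rwa [Real.log_exp] at this
      linarith
    have hlogR : Real.log (2^(k+1)/(k:ℝ)^2 * l^m)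
        = ((k:ℝ)+1) * Real.log 2 - 2 * Real.log k + (m:ℝ) * (2*u) := by
      rw [Real.log_mul (by positivity) (by positivity), Real.log_div (by positivity) (by positivity),
        Real.log_pow, Real.log_pow, hl, Real.log_pow, Real.log_exp]
      push_cast
      ring
    rw [hlogR]
    have hmu : ((k:ℝ)/2 + t - 1) * (2*u) ≤ (m:ℝ) * (2*u) := by
      apply mul_le_mul_of_nonneg_right hmlow (by linarith)
    have hnum := large_numeric k hk
    -- main arithmetic
    have huk : u * (k:ℝ) = 2*(t-1) := by
      rw [hu]; field_simp
    have hnum' : 4*t ≤ (k:ℝ) * Real.log 2 + 2 := hnum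
    have hexpand : (k:ℝ) * (Real.log 2 + u + u^2/2) ≤ ((k:ℝ)+1) * Real.log 2 - 2 * Real.log k + ((k:ℝ)/2 + t - 1) * (2*u) := by
      have hA : (k:ℝ) * (u^2/2) = u * (t-1) := by
        calc (k:ℝ)*(u^2/2) = (u*(k:ℝ))*u/2 := by ring
          _ = u*(t-1) := by rw [huk]; ring
      have hB : ((k:ℝ)/2+t-1)*(2*u) = (k:ℝ)*u + 2*(u*(t-1)) := by ring
      have hC : (u*(t-1))*(k:ℝ) = 2*(t-1)^2 := by
        calc (u*(t-1))*(k:ℝ) = (u*(k:ℝ))*(t-1) := by ring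
          _ = 2*(t-1)^2 := by rw [huk]; ring
      have hE : (2*Real.log k - Real.log 2)*(k:ℝ) ≤ 2*(t-1)^2 := by nlinarith [ht2, hnum']
      have hD : 2*Real.log k - Real.log 2 ≤ u*(t-1) := by
        have := hE.trans_eq hC.symm
        exact le_of_mul_le_mul_right this hkpos
      have h5 : (k:ℝ)*(Real.log 2 + u + u^2/2) = (k:ℝ)*Real.log 2 + (k:ℝ)*u + (k:ℝ)*(u^2/2) := by ring
      have hut : 0 ≤ u*(t-1) := mul_nonneg hu0 (by linarith)
      linarith [hA, hB, hD, h5]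
    linarith [hlogL, hexpand, hmu]
  have hlm : (0:ℝ) < l^m := by positivity
  exact le_of_mul_le_mul_right (le_trans hcher hkey) hlm


lemma tail_9 : (∑ j ∈ Finset.Icc 8 9, Nat.choose 9 j) * 9^2 ≤ 2^(9+1) := by
  have c0 : Nat.choose 9 0 = 1 := Nat.choose_zero_right 9
  have c1 : Nat.choose 9 1 = 9 := Nat.choose_one_right 9
  have sy8 : Nat.choose 9 8 = 9 := by
    have h := Nat.choose_symm (show (1:ℕ) ≤ 9 by norm_num)
    rw [show (9:ℕ) - 1 = 8 by norm_num] at h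
    exact h.trans c1
  have sy9 : Nat.choose 9 9 = 1 := Nat.choose_self 9
  rw [Finset.sum_Icc_succ_top (by norm_num),
    Finset.Icc_self, Finset.sum_singleton]
  rw [sy8, sy9]
  norm_num

lemma tail_10 : (∑ j ∈ Finset.Icc 9 10, Nat.choose 10 j) * 10^2 ≤ 2^(10+1) := by
  have c0 : Nat.choose 10 0 = 1 := Nat.choose_zero_right 10
  have c1 : Nat.choose 10 1 = 10 := Nat.choose_one_right 10
  have sy9 : Nat.choose 10 9 = 10 := by
    have h := Nat.choose_symm (show (1:ℕ) ≤ 10 by norm_num)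
    rw [show (10:ℕ) - 1 = 9 by norm_num] at h
    exact h.trans c1
  have sy10 : Nat.choose 10 10 = 1 := Nat.choose_self 10
  rw [Finset.sum_Icc_succ_top (by norm_num),
    Finset.Icc_self, Finset.sum_singleton]
  rw [sy9, sy10]
  norm_num

lemma tail_15 : (∑ j ∈ Finset.Icc 13 15, Nat.choose 15 j) * 15^2 ≤ 2^(15+1) := by
  have c0 : Nat.choose 15 0 = 1 := Nat.choose_zero_right 15
  have c1 : Nat.choose 15 1 = 15 := Nat.choose_one_right 15
  have c2 : Nat.choose 15 2 = 105 := by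
    have h2 := Nat.choose_succ_right_eq 15 1
    rw [show ((1:ℕ)+1) = 2 by norm_num, c1] at h2
    omega
  have sy13 : Nat.choose 15 13 = 105 := by
    have h := Nat.choose_symm (show (2:ℕ) ≤ 15 by norm_num)
    rw [show (15:ℕ) - 2 = 13 by norm_num] at h
    exact h.trans c2
  have sy14 : Nat.choose 15 14 = 15 := by
    have h := Nat.choose_symm (show (1:ℕ) ≤ 15 by norm_num)
    rw [show (15:ℕ) - 1 = 14 by norm_num] at h
    exact h.trans c1
  have sy15 : Nat.choose 15 15 = 1 := Nat.choose_self 15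
  rw [Finset.sum_Icc_succ_top (by norm_num), Finset.sum_Icc_succ_top (by norm_num),
    Finset.Icc_self, Finset.sum_singleton]
  rw [sy13, sy14, sy15]
  norm_num

lemma tail_19 : (∑ j ∈ Finset.Icc 16 19, Nat.choose 19 j) * 19^2 ≤ 2^(19+1) := by
  have c0 : Nat.choose 19 0 = 1 := Nat.choose_zero_right 19
  have c1 : Nat.choose 19 1 = 19 := Nat.choose_one_right 19
  have c2 : Nat.choose 19 2 = 171 := by
    have h2 := Nat.choose_succ_right_eq 19 1
    rw [show ((1:ℕ)+1) = 2 by norm_num, c1] at h2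
    omega
  have c3 : Nat.choose 19 3 = 969 := by
    have h2 := Nat.choose_succ_right_eq 19 2
    rw [show ((2:ℕ)+1) = 3 by norm_num, c2] at h2
    omega
  have sy16 : Nat.choose 19 16 = 969 := by
    have h := Nat.choose_symm (show (3:ℕ) ≤ 19 by norm_num)
    rw [show (19:ℕ) - 3 = 16 by norm_num] at h
    exact h.trans c3
  have sy17 : Nat.choose 19 17 = 171 := by
    have h := Nat.choose_symm (show (2:ℕ) ≤ 19 by norm_num)
    rw [show (19:ℕ) - 2 = 17 by norm_num] at h
    exact h.trans c2
  have sy18 : Nat.choose 19 18 = 19 := by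
    have h := Nat.choose_symm (show (1:ℕ) ≤ 19 by norm_num)
    rw [show (19:ℕ) - 1 = 18 by norm_num] at h
    exact h.trans c1
  have sy19 : Nat.choose 19 19 = 1 := Nat.choose_self 19
  rw [Finset.sum_Icc_succ_top (by norm_num), Finset.sum_Icc_succ_top (by norm_num), Finset.sum_Icc_succ_top (by norm_num),
    Finset.Icc_self, Finset.sum_singleton]
  rw [sy16, sy17, sy18, sy19]
  norm_num

lemma tail_23 : (∑ j ∈ Finset.Icc 19 23, Nat.choose 23 j) * 23^2 ≤ 2^(23+1) := by
  have c0 : Nat.choose 23 0 = 1 := Nat.choose_zero_right 23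
  have c1 : Nat.choose 23 1 = 23 := Nat.choose_one_right 23
  have c2 : Nat.choose 23 2 = 253 := by
    have h2 := Nat.choose_succ_right_eq 23 1
    rw [show ((1:ℕ)+1) = 2 by norm_num, c1] at h2
    omega
  have c3 : Nat.choose 23 3 = 1771 := by
    have h2 := Nat.choose_succ_right_eq 23 2
    rw [show ((2:ℕ)+1) = 3 by norm_num, c2] at h2
    omega
  have c4 : Nat.choose 23 4 = 8855 := by
    have h2 := Nat.choose_succ_right_eq 23 3
    rw [show ((3:ℕ)+1) = 4 by norm_num, c3] at h2
    omega
  have sy19 : Nat.choose 23 19 = 8855 := by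
    have h := Nat.choose_symm (show (4:ℕ) ≤ 23 by norm_num)
    rw [show (23:ℕ) - 4 = 19 by norm_num] at h
    exact h.trans c4
  have sy20 : Nat.choose 23 20 = 1771 := by
    have h := Nat.choose_symm (show (3:ℕ) ≤ 23 by norm_num)
    rw [show (23:ℕ) - 3 = 20 by norm_num] at h
    exact h.trans c3
  have sy21 : Nat.choose 23 21 = 253 := by
    have h := Nat.choose_symm (show (2:ℕ) ≤ 23 by norm_num)
    rw [show (23:ℕ) - 2 = 21 by norm_num] at h
    exact h.trans c2
  have sy22 : Nat.choose 23 22 = 23 := by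
    have h := Nat.choose_symm (show (1:ℕ) ≤ 23 by norm_num)
    rw [show (23:ℕ) - 1 = 22 by norm_num] at h
    exact h.trans c1
  have sy23 : Nat.choose 23 23 = 1 := Nat.choose_self 23
  rw [Finset.sum_Icc_succ_top (by norm_num), Finset.sum_Icc_succ_top (by norm_num), Finset.sum_Icc_succ_top (by norm_num), Finset.sum_Icc_succ_top (by norm_num),
    Finset.Icc_self, Finset.sum_singleton]
  rw [sy19, sy20, sy21, sy22, sy23]
  norm_num

lemma tail_27 : (∑ j ∈ Finset.Icc 22 27, Nat.choose 27 j) * 27^2 ≤ 2^(27+1) := by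
  have c0 : Nat.choose 27 0 = 1 := Nat.choose_zero_right 27
  have c1 : Nat.choose 27 1 = 27 := Nat.choose_one_right 27
  have c2 : Nat.choose 27 2 = 351 := by
    have h2 := Nat.choose_succ_right_eq 27 1
    rw [show ((1:ℕ)+1) = 2 by norm_num, c1] at h2
    omega
  have c3 : Nat.choose 27 3 = 2925 := by
    have h2 := Nat.choose_succ_right_eq 27 2
    rw [show ((2:ℕ)+1) = 3 by norm_num, c2] at h2
    omega
  have c4 : Nat.choose 27 4 = 17550 := by
    have h2 := Nat.choose_succ_right_eq 27 3
    rw [show ((3:ℕ)+1) = 4 by norm_num, c3] at h2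
    omega
  have c5 : Nat.choose 27 5 = 80730 := by
    have h2 := Nat.choose_succ_right_eq 27 4
    rw [show ((4:ℕ)+1) = 5 by norm_num, c4] at h2
    omega
  have sy22 : Nat.choose 27 22 = 80730 := by
    have h := Nat.choose_symm (show (5:ℕ) ≤ 27 by norm_num)
    rw [show (27:ℕ) - 5 = 22 by norm_num] at h
    exact h.trans c5
  have sy23 : Nat.choose 27 23 = 17550 := by
    have h := Nat.choose_symm (show (4:ℕ) ≤ 27 by norm_num)
    rw [show (27:ℕ) - 4 = 23 by norm_num] at h
    exact h.trans c4
  have sy24 : Nat.choose 27 24 = 2925 := by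
    have h := Nat.choose_symm (show (3:ℕ) ≤ 27 by norm_num)
    rw [show (27:ℕ) - 3 = 24 by norm_num] at h
    exact h.trans c3
  have sy25 : Nat.choose 27 25 = 351 := by
    have h := Nat.choose_symm (show (2:ℕ) ≤ 27 by norm_num)
    rw [show (27:ℕ) - 2 = 25 by norm_num] at h
    exact h.trans c2
  have sy26 : Nat.choose 27 26 = 27 := by
    have h := Nat.choose_symm (show (1:ℕ) ≤ 27 by norm_num)
    rw [show (27:ℕ) - 1 = 26 by norm_num] at h
    exact h.trans c1
  have sy27 : Nat.choose 27 27 = 1 := Nat.choose_self 27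
  rw [Finset.sum_Icc_succ_top (by norm_num), Finset.sum_Icc_succ_top (by norm_num), Finset.sum_Icc_succ_top (by norm_num), Finset.sum_Icc_succ_top (by norm_num), Finset.sum_Icc_succ_top (by norm_num),
    Finset.Icc_self, Finset.sum_singleton]
  rw [sy22, sy23, sy24, sy25, sy26, sy27]
  norm_num

lemma tail_34 : (∑ j ∈ Finset.Icc 27 34, Nat.choose 34 j) * 34^2 ≤ 2^(34+1) := by
  have c0 : Nat.choose 34 0 = 1 := Nat.choose_zero_right 34
  have c1 : Nat.choose 34 1 = 34 := Nat.choose_one_right 34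
  have c2 : Nat.choose 34 2 = 561 := by
    have h2 := Nat.choose_succ_right_eq 34 1
    rw [show ((1:ℕ)+1) = 2 by norm_num, c1] at h2
    omega
  have c3 : Nat.choose 34 3 = 5984 := by
    have h2 := Nat.choose_succ_right_eq 34 2
    rw [show ((2:ℕ)+1) = 3 by norm_num, c2] at h2
    omega
  have c4 : Nat.choose 34 4 = 46376 := by
    have h2 := Nat.choose_succ_right_eq 34 3
    rw [show ((3:ℕ)+1) = 4 by norm_num, c3] at h2
    omega
  have c5 : Nat.choose 34 5 = 278256 := by
    have h2 := Nat.choose_succ_right_eq 34 4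
    rw [show ((4:ℕ)+1) = 5 by norm_num, c4] at h2
    omega
  have c6 : Nat.choose 34 6 = 1344904 := by
    have h2 := Nat.choose_succ_right_eq 34 5
    rw [show ((5:ℕ)+1) = 6 by norm_num, c5] at h2
    omega
  have c7 : Nat.choose 34 7 = 5379616 := by
    have h2 := Nat.choose_succ_right_eq 34 6
    rw [show ((6:ℕ)+1) = 7 by norm_num, c6] at h2
    omega
  have sy27 : Nat.choose 34 27 = 5379616 := by
    have h := Nat.choose_symm (show (7:ℕ) ≤ 34 by norm_num)
    rw [show (34:ℕ) - 7 = 27 by norm_num] at h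
    exact h.trans c7
  have sy28 : Nat.choose 34 28 = 1344904 := by
    have h := Nat.choose_symm (show (6:ℕ) ≤ 34 by norm_num)
    rw [show (34:ℕ) - 6 = 28 by norm_num] at h
    exact h.trans c6
  have sy29 : Nat.choose 34 29 = 278256 := by
    have h := Nat.choose_symm (show (5:ℕ) ≤ 34 by norm_num)
    rw [show (34:ℕ) - 5 = 29 by norm_num] at h
    exact h.trans c5
  have sy30 : Nat.choose 34 30 = 46376 := by
    have h := Nat.choose_symm (show (4:ℕ) ≤ 34 by norm_num)
    rw [show (34:ℕ) - 4 = 30 by norm_num] at h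
    exact h.trans c4
  have sy31 : Nat.choose 34 31 = 5984 := by
    have h := Nat.choose_symm (show (3:ℕ) ≤ 34 by norm_num)
    rw [show (34:ℕ) - 3 = 31 by norm_num] at h
    exact h.trans c3
  have sy32 : Nat.choose 34 32 = 561 := by
    have h := Nat.choose_symm (show (2:ℕ) ≤ 34 by norm_num)
    rw [show (34:ℕ) - 2 = 32 by norm_num] at h
    exact h.trans c2
  have sy33 : Nat.choose 34 33 = 34 := by
    have h := Nat.choose_symm (show (1:ℕ) ≤ 34 by norm_num)
    rw [show (34:ℕ) - 1 = 33 by norm_num] at h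
    exact h.trans c1
  have sy34 : Nat.choose 34 34 = 1 := Nat.choose_self 34
  rw [Finset.sum_Icc_succ_top (by norm_num), Finset.sum_Icc_succ_top (by norm_num), Finset.sum_Icc_succ_top (by norm_num), Finset.sum_Icc_succ_top (by norm_num), Finset.sum_Icc_succ_top (by norm_num), Finset.sum_Icc_succ_top (by norm_num), Finset.sum_Icc_succ_top (by norm_num),
    Finset.Icc_self, Finset.sum_singleton]
  rw [sy27, sy28, sy29, sy30, sy31, sy32, sy33, sy34]
  norm_num

lemma tail_47 : (∑ j ∈ Finset.Icc 36 47, Nat.choose 47 j) * 47^2 ≤ 2^(47+1) := by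
  have c0 : Nat.choose 47 0 = 1 := Nat.choose_zero_right 47
  have c1 : Nat.choose 47 1 = 47 := Nat.choose_one_right 47
  have c2 : Nat.choose 47 2 = 1081 := by
    have h2 := Nat.choose_succ_right_eq 47 1
    rw [show ((1:ℕ)+1) = 2 by norm_num, c1] at h2
    omega
  have c3 : Nat.choose 47 3 = 16215 := by
    have h2 := Nat.choose_succ_right_eq 47 2
    rw [show ((2:ℕ)+1) = 3 by norm_num, c2] at h2
    omega
  have c4 : Nat.choose 47 4 = 178365 := by
    have h2 := Nat.choose_succ_right_eq 47 3
    rw [show ((3:ℕ)+1) = 4 by norm_num, c3] at h2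
    omega
  have c5 : Nat.choose 47 5 = 1533939 := by
    have h2 := Nat.choose_succ_right_eq 47 4
    rw [show ((4:ℕ)+1) = 5 by norm_num, c4] at h2
    omega
  have c6 : Nat.choose 47 6 = 10737573 := by
    have h2 := Nat.choose_succ_right_eq 47 5
    rw [show ((5:ℕ)+1) = 6 by norm_num, c5] at h2
    omega
  have c7 : Nat.choose 47 7 = 62891499 := by
    have h2 := Nat.choose_succ_right_eq 47 6
    rw [show ((6:ℕ)+1) = 7 by norm_num, c6] at h2
    omega
  have c8 : Nat.choose 47 8 = 314457495 := by
    have h2 := Nat.choose_succ_right_eq 47 7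
    rw [show ((7:ℕ)+1) = 8 by norm_num, c7] at h2
    omega
  have c9 : Nat.choose 47 9 = 1362649145 := by
    have h2 := Nat.choose_succ_right_eq 47 8
    rw [show ((8:ℕ)+1) = 9 by norm_num, c8] at h2
    omega
  have c10 : Nat.choose 47 10 = 5178066751 := by
    have h2 := Nat.choose_succ_right_eq 47 9
    rw [show ((9:ℕ)+1) = 10 by norm_num, c9] at h2
    omega
  have c11 : Nat.choose 47 11 = 17417133617 := by
    have h2 := Nat.choose_succ_right_eq 47 10
    rw [show ((10:ℕ)+1) = 11 by norm_num, c10] at h2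
    omega
  have sy36 : Nat.choose 47 36 = 17417133617 := by
    have h := Nat.choose_symm (show (11:ℕ) ≤ 47 by norm_num)
    rw [show (47:ℕ) - 11 = 36 by norm_num] at h
    exact h.trans c11
  have sy37 : Nat.choose 47 37 = 5178066751 := by
    have h := Nat.choose_symm (show (10:ℕ) ≤ 47 by norm_num)
    rw [show (47:ℕ) - 10 = 37 by norm_num] at h
    exact h.trans c10
  have sy38 : Nat.choose 47 38 = 1362649145 := by
    have h := Nat.choose_symm (show (9:ℕ) ≤ 47 by norm_num)
    rw [show (47:ℕ) - 9 = 38 by norm_num] at h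
    exact h.trans c9
  have sy39 : Nat.choose 47 39 = 314457495 := by
    have h := Nat.choose_symm (show (8:ℕ) ≤ 47 by norm_num)
    rw [show (47:ℕ) - 8 = 39 by norm_num] at h
    exact h.trans c8
  have sy40 : Nat.choose 47 40 = 62891499 := by
    have h := Nat.choose_symm (show (7:ℕ) ≤ 47 by norm_num)
    rw [show (47:ℕ) - 7 = 40 by norm_num] at h
    exact h.trans c7
  have sy41 : Nat.choose 47 41 = 10737573 := by
    have h := Nat.choose_symm (show (6:ℕ) ≤ 47 by norm_num)
    rw [show (47:ℕ) - 6 = 41 by norm_num] at h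
    exact h.trans c6
  have sy42 : Nat.choose 47 42 = 1533939 := by
    have h := Nat.choose_symm (show (5:ℕ) ≤ 47 by norm_num)
    rw [show (47:ℕ) - 5 = 42 by norm_num] at h
    exact h.trans c5
  have sy43 : Nat.choose 47 43 = 178365 := by
    have h := Nat.choose_symm (show (4:ℕ) ≤ 47 by norm_num)
    rw [show (47:ℕ) - 4 = 43 by norm_num] at h
    exact h.trans c4
  have sy44 : Nat.choose 47 44 = 16215 := by
    have h := Nat.choose_symm (show (3:ℕ) ≤ 47 by norm_num)
    rw [show (47:ℕ) - 3 = 44 by norm_num] at h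
    exact h.trans c3
  have sy45 : Nat.choose 47 45 = 1081 := by
    have h := Nat.choose_symm (show (2:ℕ) ≤ 47 by norm_num)
    rw [show (47:ℕ) - 2 = 45 by norm_num] at h
    exact h.trans c2
  have sy46 : Nat.choose 47 46 = 47 := by
    have h := Nat.choose_symm (show (1:ℕ) ≤ 47 by norm_num)
    rw [show (47:ℕ) - 1 = 46 by norm_num] at h
    exact h.trans c1
  have sy47 : Nat.choose 47 47 = 1 := Nat.choose_self 47
  rw [Finset.sum_Icc_succ_top (by norm_num), Finset.sum_Icc_succ_top (by norm_num), Finset.sum_Icc_succ_top (by norm_num), Finset.sum_Icc_succ_top (by norm_num), Finset.sum_Icc_succ_top (by norm_num), Finset.sum_Icc_succ_top (by norm_num), Finset.sum_Icc_succ_top (by norm_num), Finset.sum_Icc_succ_top (by norm_num), Finset.sum_Icc_succ_top (by norm_num), Finset.sum_Icc_succ_top (by norm_num), Finset.sum_Icc_succ_top (by norm_num),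
    Finset.Icc_self, Finset.sum_singleton]
  rw [sy36, sy37, sy38, sy39, sy40, sy41, sy42, sy43, sy44, sy45, sy46, sy47]
  norm_num

lemma tail_50 : (∑ j ∈ Finset.Icc 38 50, Nat.choose 50 j) * 50^2 ≤ 2^(50+1) := by
  have c0 : Nat.choose 50 0 = 1 := Nat.choose_zero_right 50
  have c1 : Nat.choose 50 1 = 50 := Nat.choose_one_right 50
  have c2 : Nat.choose 50 2 = 1225 := by
    have h2 := Nat.choose_succ_right_eq 50 1
    rw [show ((1:ℕ)+1) = 2 by norm_num, c1] at h2
    omega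
  have c3 : Nat.choose 50 3 = 19600 := by
    have h2 := Nat.choose_succ_right_eq 50 2
    rw [show ((2:ℕ)+1) = 3 by norm_num, c2] at h2
    omega
  have c4 : Nat.choose 50 4 = 230300 := by
    have h2 := Nat.choose_succ_right_eq 50 3
    rw [show ((3:ℕ)+1) = 4 by norm_num, c3] at h2
    omega
  have c5 : Nat.choose 50 5 = 2118760 := by
    have h2 := Nat.choose_succ_right_eq 50 4
    rw [show ((4:ℕ)+1) = 5 by norm_num, c4] at h2
    omega
  have c6 : Nat.choose 50 6 = 15890700 := by
    have h2 := Nat.choose_succ_right_eq 50 5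
    rw [show ((5:ℕ)+1) = 6 by norm_num, c5] at h2
    omega
  have c7 : Nat.choose 50 7 = 99884400 := by
    have h2 := Nat.choose_succ_right_eq 50 6
    rw [show ((6:ℕ)+1) = 7 by norm_num, c6] at h2
    omega
  have c8 : Nat.choose 50 8 = 536878650 := by
    have h2 := Nat.choose_succ_right_eq 50 7
    rw [show ((7:ℕ)+1) = 8 by norm_num, c7] at h2
    omega
  have c9 : Nat.choose 50 9 = 2505433700 := by
    have h2 := Nat.choose_succ_right_eq 50 8
    rw [show ((8:ℕ)+1) = 9 by norm_num, c8] at h2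
    omega
  have c10 : Nat.choose 50 10 = 10272278170 := by
    have h2 := Nat.choose_succ_right_eq 50 9
    rw [show ((9:ℕ)+1) = 10 by norm_num, c9] at h2
    omega
  have c11 : Nat.choose 50 11 = 37353738800 := by
    have h2 := Nat.choose_succ_right_eq 50 10
    rw [show ((10:ℕ)+1) = 11 by norm_num, c10] at h2
    omega
  have c12 : Nat.choose 50 12 = 121399651100 := by
    have h2 := Nat.choose_succ_right_eq 50 11
    rw [show ((11:ℕ)+1) = 12 by norm_num, c11] at h2
    omega
  have sy38 : Nat.choose 50 38 = 121399651100 := by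
    have h := Nat.choose_symm (show (12:ℕ) ≤ 50 by norm_num)
    rw [show (50:ℕ) - 12 = 38 by norm_num] at h
    exact h.trans c12
  have sy39 : Nat.choose 50 39 = 37353738800 := by
    have h := Nat.choose_symm (show (11:ℕ) ≤ 50 by norm_num)
    rw [show (50:ℕ) - 11 = 39 by norm_num] at h
    exact h.trans c11
  have sy40 : Nat.choose 50 40 = 10272278170 := by
    have h := Nat.choose_symm (show (10:ℕ) ≤ 50 by norm_num)
    rw [show (50:ℕ) - 10 = 40 by norm_num] at h
    exact h.trans c10
  have sy41 : Nat.choose 50 41 = 2505433700 := by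
    have h := Nat.choose_symm (show (9:ℕ) ≤ 50 by norm_num)
    rw [show (50:ℕ) - 9 = 41 by norm_num] at h
    exact h.trans c9
  have sy42 : Nat.choose 50 42 = 536878650 := by
    have h := Nat.choose_symm (show (8:ℕ) ≤ 50 by norm_num)
    rw [show (50:ℕ) - 8 = 42 by norm_num] at h
    exact h.trans c8
  have sy43 : Nat.choose 50 43 = 99884400 := by
    have h := Nat.choose_symm (show (7:ℕ) ≤ 50 by norm_num)
    rw [show (50:ℕ) - 7 = 43 by norm_num] at h
    exact h.trans c7
  have sy44 : Nat.choose 50 44 = 15890700 := by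
    have h := Nat.choose_symm (show (6:ℕ) ≤ 50 by norm_num)
    rw [show (50:ℕ) - 6 = 44 by norm_num] at h
    exact h.trans c6
  have sy45 : Nat.choose 50 45 = 2118760 := by
    have h := Nat.choose_symm (show (5:ℕ) ≤ 50 by norm_num)
    rw [show (50:ℕ) - 5 = 45 by norm_num] at h
    exact h.trans c5
  have sy46 : Nat.choose 50 46 = 230300 := by
    have h := Nat.choose_symm (show (4:ℕ) ≤ 50 by norm_num)
    rw [show (50:ℕ) - 4 = 46 by norm_num] at h
    exact h.trans c4
  have sy47 : Nat.choose 50 47 = 19600 := by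
    have h := Nat.choose_symm (show (3:ℕ) ≤ 50 by norm_num)
    rw [show (50:ℕ) - 3 = 47 by norm_num] at h
    exact h.trans c3
  have sy48 : Nat.choose 50 48 = 1225 := by
    have h := Nat.choose_symm (show (2:ℕ) ≤ 50 by norm_num)
    rw [show (50:ℕ) - 2 = 48 by norm_num] at h
    exact h.trans c2
  have sy49 : Nat.choose 50 49 = 50 := by
    have h := Nat.choose_symm (show (1:ℕ) ≤ 50 by norm_num)
    rw [show (50:ℕ) - 1 = 49 by norm_num] at h
    exact h.trans c1
  have sy50 : Nat.choose 50 50 = 1 := Nat.choose_self 50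
  rw [Finset.sum_Icc_succ_top (by norm_num), Finset.sum_Icc_succ_top (by norm_num), Finset.sum_Icc_succ_top (by norm_num), Finset.sum_Icc_succ_top (by norm_num), Finset.sum_Icc_succ_top (by norm_num), Finset.sum_Icc_succ_top (by norm_num), Finset.sum_Icc_succ_top (by norm_num), Finset.sum_Icc_succ_top (by norm_num), Finset.sum_Icc_succ_top (by norm_num), Finset.sum_Icc_succ_top (by norm_num), Finset.sum_Icc_succ_top (by norm_num), Finset.sum_Icc_succ_top (by norm_num),
    Finset.Icc_self, Finset.sum_singleton]
  rw [sy38, sy39, sy40, sy41, sy42, sy43, sy44, sy45, sy46, sy47, sy48, sy49, sy50]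
  norm_num

lemma tail_53 : (∑ j ∈ Finset.Icc 40 53, Nat.choose 53 j) * 53^2 ≤ 2^(53+1) := by
  have c0 : Nat.choose 53 0 = 1 := Nat.choose_zero_right 53
  have c1 : Nat.choose 53 1 = 53 := Nat.choose_one_right 53
  have c2 : Nat.choose 53 2 = 1378 := by
    have h2 := Nat.choose_succ_right_eq 53 1
    rw [show ((1:ℕ)+1) = 2 by norm_num, c1] at h2
    omega
  have c3 : Nat.choose 53 3 = 23426 := by
    have h2 := Nat.choose_succ_right_eq 53 2
    rw [show ((2:ℕ)+1) = 3 by norm_num, c2] at h2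
    omega
  have c4 : Nat.choose 53 4 = 292825 := by
    have h2 := Nat.choose_succ_right_eq 53 3
    rw [show ((3:ℕ)+1) = 4 by norm_num, c3] at h2
    omega
  have c5 : Nat.choose 53 5 = 2869685 := by
    have h2 := Nat.choose_succ_right_eq 53 4
    rw [show ((4:ℕ)+1) = 5 by norm_num, c4] at h2
    omega
  have c6 : Nat.choose 53 6 = 22957480 := by
    have h2 := Nat.choose_succ_right_eq 53 5
    rw [show ((5:ℕ)+1) = 6 by norm_num, c5] at h2
    omega
  have c7 : Nat.choose 53 7 = 154143080 := by
    have h2 := Nat.choose_succ_right_eq 53 6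
    rw [show ((6:ℕ)+1) = 7 by norm_num, c6] at h2
    omega
  have c8 : Nat.choose 53 8 = 886322710 := by
    have h2 := Nat.choose_succ_right_eq 53 7
    rw [show ((7:ℕ)+1) = 8 by norm_num, c7] at h2
    omega
  have c9 : Nat.choose 53 9 = 4431613550 := by
    have h2 := Nat.choose_succ_right_eq 53 8
    rw [show ((8:ℕ)+1) = 9 by norm_num, c8] at h2
    omega
  have c10 : Nat.choose 53 10 = 19499099620 := by
    have h2 := Nat.choose_succ_right_eq 53 9
    rw [show ((9:ℕ)+1) = 10 by norm_num, c9] at h2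
    omega
  have c11 : Nat.choose 53 11 = 76223753060 := by
    have h2 := Nat.choose_succ_right_eq 53 10
    rw [show ((10:ℕ)+1) = 11 by norm_num, c10] at h2
    omega
  have c12 : Nat.choose 53 12 = 266783135710 := by
    have h2 := Nat.choose_succ_right_eq 53 11
    rw [show ((11:ℕ)+1) = 12 by norm_num, c11] at h2
    omega
  have c13 : Nat.choose 53 13 = 841392966470 := by
    have h2 := Nat.choose_succ_right_eq 53 12
    rw [show ((12:ℕ)+1) = 13 by norm_num, c12] at h2
    omega
  have sy40 : Nat.choose 53 40 = 841392966470 := by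
    have h := Nat.choose_symm (show (13:ℕ) ≤ 53 by norm_num)
    rw [show (53:ℕ) - 13 = 40 by norm_num] at h
    exact h.trans c13
  have sy41 : Nat.choose 53 41 = 266783135710 := by
    have h := Nat.choose_symm (show (12:ℕ) ≤ 53 by norm_num)
    rw [show (53:ℕ) - 12 = 41 by norm_num] at h
    exact h.trans c12
  have sy42 : Nat.choose 53 42 = 76223753060 := by
    have h := Nat.choose_symm (show (11:ℕ) ≤ 53 by norm_num)
    rw [show (53:ℕ) - 11 = 42 by norm_num] at h
    exact h.trans c11
  have sy43 : Nat.choose 53 43 = 19499099620 := by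
    have h := Nat.choose_symm (show (10:ℕ) ≤ 53 by norm_num)
    rw [show (53:ℕ) - 10 = 43 by norm_num] at h
    exact h.trans c10
  have sy44 : Nat.choose 53 44 = 4431613550 := by
    have h := Nat.choose_symm (show (9:ℕ) ≤ 53 by norm_num)
    rw [show (53:ℕ) - 9 = 44 by norm_num] at h
    exact h.trans c9
  have sy45 : Nat.choose 53 45 = 886322710 := by
    have h := Nat.choose_symm (show (8:ℕ) ≤ 53 by norm_num)
    rw [show (53:ℕ) - 8 = 45 by norm_num] at h
    exact h.trans c8
  have sy46 : Nat.choose 53 46 = 154143080 := by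
    have h := Nat.choose_symm (show (7:ℕ) ≤ 53 by norm_num)
    rw [show (53:ℕ) - 7 = 46 by norm_num] at h
    exact h.trans c7
  have sy47 : Nat.choose 53 47 = 22957480 := by
    have h := Nat.choose_symm (show (6:ℕ) ≤ 53 by norm_num)
    rw [show (53:ℕ) - 6 = 47 by norm_num] at h
    exact h.trans c6
  have sy48 : Nat.choose 53 48 = 2869685 := by
    have h := Nat.choose_symm (show (5:ℕ) ≤ 53 by norm_num)
    rw [show (53:ℕ) - 5 = 48 by norm_num] at h
    exact h.trans c5
  have sy49 : Nat.choose 53 49 = 292825 := by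
    have h := Nat.choose_symm (show (4:ℕ) ≤ 53 by norm_num)
    rw [show (53:ℕ) - 4 = 49 by norm_num] at h
    exact h.trans c4
  have sy50 : Nat.choose 53 50 = 23426 := by
    have h := Nat.choose_symm (show (3:ℕ) ≤ 53 by norm_num)
    rw [show (53:ℕ) - 3 = 50 by norm_num] at h
    exact h.trans c3
  have sy51 : Nat.choose 53 51 = 1378 := by
    have h := Nat.choose_symm (show (2:ℕ) ≤ 53 by norm_num)
    rw [show (53:ℕ) - 2 = 51 by norm_num] at h
    exact h.trans c2
  have sy52 : Nat.choose 53 52 = 53 := by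
    have h := Nat.choose_symm (show (1:ℕ) ≤ 53 by norm_num)
    rw [show (53:ℕ) - 1 = 52 by norm_num] at h
    exact h.trans c1
  have sy53 : Nat.choose 53 53 = 1 := Nat.choose_self 53
  rw [Finset.sum_Icc_succ_top (by norm_num), Finset.sum_Icc_succ_top (by norm_num), Finset.sum_Icc_succ_top (by norm_num), Finset.sum_Icc_succ_top (by norm_num), Finset.sum_Icc_succ_top (by norm_num), Finset.sum_Icc_succ_top (by norm_num), Finset.sum_Icc_succ_top (by norm_num), Finset.sum_Icc_succ_top (by norm_num), Finset.sum_Icc_succ_top (by norm_num), Finset.sum_Icc_succ_top (by norm_num), Finset.sum_Icc_succ_top (by norm_num), Finset.sum_Icc_succ_top (by norm_num), Finset.sum_Icc_succ_top (by norm_num),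
    Finset.Icc_self, Finset.sum_singleton]
  rw [sy40, sy41, sy42, sy43, sy44, sy45, sy46, sy47, sy48, sy49, sy50, sy51, sy52, sy53]
  norm_num

lemma tail_56 : (∑ j ∈ Finset.Icc 42 56, Nat.choose 56 j) * 56^2 ≤ 2^(56+1) := by
  have c0 : Nat.choose 56 0 = 1 := Nat.choose_zero_right 56
  have c1 : Nat.choose 56 1 = 56 := Nat.choose_one_right 56
  have c2 : Nat.choose 56 2 = 1540 := by
    have h2 := Nat.choose_succ_right_eq 56 1
    rw [show ((1:ℕ)+1) = 2 by norm_num, c1] at h2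
    omega
  have c3 : Nat.choose 56 3 = 27720 := by
    have h2 := Nat.choose_succ_right_eq 56 2
    rw [show ((2:ℕ)+1) = 3 by norm_num, c2] at h2
    omega
  have c4 : Nat.choose 56 4 = 367290 := by
    have h2 := Nat.choose_succ_right_eq 56 3
    rw [show ((3:ℕ)+1) = 4 by norm_num, c3] at h2
    omega
  have c5 : Nat.choose 56 5 = 3819816 := by
    have h2 := Nat.choose_succ_right_eq 56 4
    rw [show ((4:ℕ)+1) = 5 by norm_num, c4] at h2
    omega
  have c6 : Nat.choose 56 6 = 32468436 := by
    have h2 := Nat.choose_succ_right_eq 56 5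
    rw [show ((5:ℕ)+1) = 6 by norm_num, c5] at h2
    omega
  have c7 : Nat.choose 56 7 = 231917400 := by
    have h2 := Nat.choose_succ_right_eq 56 6
    rw [show ((6:ℕ)+1) = 7 by norm_num, c6] at h2
    omega
  have c8 : Nat.choose 56 8 = 1420494075 := by
    have h2 := Nat.choose_succ_right_eq 56 7
    rw [show ((7:ℕ)+1) = 8 by norm_num, c7] at h2
    omega
  have c9 : Nat.choose 56 9 = 7575968400 := by
    have h2 := Nat.choose_succ_right_eq 56 8
    rw [show ((8:ℕ)+1) = 9 by norm_num, c8] at h2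
    omega
  have c10 : Nat.choose 56 10 = 35607051480 := by
    have h2 := Nat.choose_succ_right_eq 56 9
    rw [show ((9:ℕ)+1) = 10 by norm_num, c9] at h2
    omega
  have c11 : Nat.choose 56 11 = 148902215280 := by
    have h2 := Nat.choose_succ_right_eq 56 10
    rw [show ((10:ℕ)+1) = 11 by norm_num, c10] at h2
    omega
  have c12 : Nat.choose 56 12 = 558383307300 := by
    have h2 := Nat.choose_succ_right_eq 56 11
    rw [show ((11:ℕ)+1) = 12 by norm_num, c11] at h2
    omega
  have c13 : Nat.choose 56 13 = 1889912732400 := by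
    have h2 := Nat.choose_succ_right_eq 56 12
    rw [show ((12:ℕ)+1) = 13 by norm_num, c12] at h2
    omega
  have c14 : Nat.choose 56 14 = 5804731963800 := by
    have h2 := Nat.choose_succ_right_eq 56 13
    rw [show ((13:ℕ)+1) = 14 by norm_num, c13] at h2
    omega
  have sy42 : Nat.choose 56 42 = 5804731963800 := by
    have h := Nat.choose_symm (show (14:ℕ) ≤ 56 by norm_num)
    rw [show (56:ℕ) - 14 = 42 by norm_num] at h
    exact h.trans c14
  have sy43 : Nat.choose 56 43 = 1889912732400 := by
    have h := Nat.choose_symm (show (13:ℕ) ≤ 56 by norm_num)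
    rw [show (56:ℕ) - 13 = 43 by norm_num] at h
    exact h.trans c13
  have sy44 : Nat.choose 56 44 = 558383307300 := by
    have h := Nat.choose_symm (show (12:ℕ) ≤ 56 by norm_num)
    rw [show (56:ℕ) - 12 = 44 by norm_num] at h
    exact h.trans c12
  have sy45 : Nat.choose 56 45 = 148902215280 := by
    have h := Nat.choose_symm (show (11:ℕ) ≤ 56 by norm_num)
    rw [show (56:ℕ) - 11 = 45 by norm_num] at h
    exact h.trans c11
  have sy46 : Nat.choose 56 46 = 35607051480 := by
    have h := Nat.choose_symm (show (10:ℕ) ≤ 56 by norm_num)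
    rw [show (56:ℕ) - 10 = 46 by norm_num] at h
    exact h.trans c10
  have sy47 : Nat.choose 56 47 = 7575968400 := by
    have h := Nat.choose_symm (show (9:ℕ) ≤ 56 by norm_num)
    rw [show (56:ℕ) - 9 = 47 by norm_num] at h
    exact h.trans c9
  have sy48 : Nat.choose 56 48 = 1420494075 := by
    have h := Nat.choose_symm (show (8:ℕ) ≤ 56 by norm_num)
    rw [show (56:ℕ) - 8 = 48 by norm_num] at h
    exact h.trans c8
  have sy49 : Nat.choose 56 49 = 231917400 := by
    have h := Nat.choose_symm (show (7:ℕ) ≤ 56 by norm_num)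
    rw [show (56:ℕ) - 7 = 49 by norm_num] at h
    exact h.trans c7
  have sy50 : Nat.choose 56 50 = 32468436 := by
    have h := Nat.choose_symm (show (6:ℕ) ≤ 56 by norm_num)
    rw [show (56:ℕ) - 6 = 50 by norm_num] at h
    exact h.trans c6
  have sy51 : Nat.choose 56 51 = 3819816 := by
    have h := Nat.choose_symm (show (5:ℕ) ≤ 56 by norm_num)
    rw [show (56:ℕ) - 5 = 51 by norm_num] at h
    exact h.trans c5
  have sy52 : Nat.choose 56 52 = 367290 := by
    have h := Nat.choose_symm (show (4:ℕ) ≤ 56 by norm_num)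
    rw [show (56:ℕ) - 4 = 52 by norm_num] at h
    exact h.trans c4
  have sy53 : Nat.choose 56 53 = 27720 := by
    have h := Nat.choose_symm (show (3:ℕ) ≤ 56 by norm_num)
    rw [show (56:ℕ) - 3 = 53 by norm_num] at h
    exact h.trans c3
  have sy54 : Nat.choose 56 54 = 1540 := by
    have h := Nat.choose_symm (show (2:ℕ) ≤ 56 by norm_num)
    rw [show (56:ℕ) - 2 = 54 by norm_num] at h
    exact h.trans c2
  have sy55 : Nat.choose 56 55 = 56 := by
    have h := Nat.choose_symm (show (1:ℕ) ≤ 56 by norm_num)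
    rw [show (56:ℕ) - 1 = 55 by norm_num] at h
    exact h.trans c1
  have sy56 : Nat.choose 56 56 = 1 := Nat.choose_self 56
  rw [Finset.sum_Icc_succ_top (by norm_num), Finset.sum_Icc_succ_top (by norm_num), Finset.sum_Icc_succ_top (by norm_num), Finset.sum_Icc_succ_top (by norm_num), Finset.sum_Icc_succ_top (by norm_num), Finset.sum_Icc_succ_top (by norm_num), Finset.sum_Icc_succ_top (by norm_num), Finset.sum_Icc_succ_top (by norm_num), Finset.sum_Icc_succ_top (by norm_num), Finset.sum_Icc_succ_top (by norm_num), Finset.sum_Icc_succ_top (by norm_num), Finset.sum_Icc_succ_top (by norm_num), Finset.sum_Icc_succ_top (by norm_num), Finset.sum_Icc_succ_top (by norm_num),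
    Finset.Icc_self, Finset.sum_singleton]
  rw [sy42, sy43, sy44, sy45, sy46, sy47, sy48, sy49, sy50, sy51, sy52, sy53, sy54, sy55, sy56]
  norm_num

lemma tail_79 : (∑ j ∈ Finset.Icc 57 79, Nat.choose 79 j) * 79^2 ≤ 2^(79+1) := by
  have c0 : Nat.choose 79 0 = 1 := Nat.choose_zero_right 79
  have c1 : Nat.choose 79 1 = 79 := Nat.choose_one_right 79
  have c2 : Nat.choose 79 2 = 3081 := by
    have h2 := Nat.choose_succ_right_eq 79 1
    rw [show ((1:ℕ)+1) = 2 by norm_num, c1] at h2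
    omega
  have c3 : Nat.choose 79 3 = 79079 := by
    have h2 := Nat.choose_succ_right_eq 79 2
    rw [show ((2:ℕ)+1) = 3 by norm_num, c2] at h2
    omega
  have c4 : Nat.choose 79 4 = 1502501 := by
    have h2 := Nat.choose_succ_right_eq 79 3
    rw [show ((3:ℕ)+1) = 4 by norm_num, c3] at h2
    omega
  have c5 : Nat.choose 79 5 = 22537515 := by
    have h2 := Nat.choose_succ_right_eq 79 4
    rw [show ((4:ℕ)+1) = 5 by norm_num, c4] at h2
    omega
  have c6 : Nat.choose 79 6 = 277962685 := by
    have h2 := Nat.choose_succ_right_eq 79 5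
    rw [show ((5:ℕ)+1) = 6 by norm_num, c5] at h2
    omega
  have c7 : Nat.choose 79 7 = 2898753715 := by
    have h2 := Nat.choose_succ_right_eq 79 6
    rw [show ((6:ℕ)+1) = 7 by norm_num, c6] at h2
    omega
  have c8 : Nat.choose 79 8 = 26088783435 := by
    have h2 := Nat.choose_succ_right_eq 79 7
    rw [show ((7:ℕ)+1) = 8 by norm_num, c7] at h2
    omega
  have c9 : Nat.choose 79 9 = 205811513765 := by
    have h2 := Nat.choose_succ_right_eq 79 8
    rw [show ((8:ℕ)+1) = 9 by norm_num, c8] at h2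
    omega
  have c10 : Nat.choose 79 10 = 1440680596355 := by
    have h2 := Nat.choose_succ_right_eq 79 9
    rw [show ((9:ℕ)+1) = 10 by norm_num, c9] at h2
    omega
  have c11 : Nat.choose 79 11 = 9036996468045 := by
    have h2 := Nat.choose_succ_right_eq 79 10
    rw [show ((10:ℕ)+1) = 11 by norm_num, c10] at h2
    omega
  have c12 : Nat.choose 79 12 = 51209646652255 := by
    have h2 := Nat.choose_succ_right_eq 79 11
    rw [show ((11:ℕ)+1) = 12 by norm_num, c11] at h2
    omega
  have c13 : Nat.choose 79 13 = 263926640438545 := by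
    have h2 := Nat.choose_succ_right_eq 79 12
    rw [show ((12:ℕ)+1) = 13 by norm_num, c12] at h2
    omega
  have c14 : Nat.choose 79 14 = 1244225590638855 := by
    have h2 := Nat.choose_succ_right_eq 79 13
    rw [show ((13:ℕ)+1) = 14 by norm_num, c13] at h2
    omega
  have c15 : Nat.choose 79 15 = 5391644226101705 := by
    have h2 := Nat.choose_succ_right_eq 79 14
    rw [show ((14:ℕ)+1) = 15 by norm_num, c14] at h2
    omega
  have c16 : Nat.choose 79 16 = 21566576904406820 := by
    have h2 := Nat.choose_succ_right_eq 79 15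
    rw [show ((15:ℕ)+1) = 16 by norm_num, c15] at h2
    omega
  have c17 : Nat.choose 79 17 = 79923196763389980 := by
    have h2 := Nat.choose_succ_right_eq 79 16
    rw [show ((16:ℕ)+1) = 17 by norm_num, c16] at h2
    omega
  have c18 : Nat.choose 79 18 = 275291011073898820 := by
    have h2 := Nat.choose_succ_right_eq 79 17
    rw [show ((17:ℕ)+1) = 18 by norm_num, c17] at h2
    omega
  have c19 : Nat.choose 79 19 = 883829035553043580 := by
    have h2 := Nat.choose_succ_right_eq 79 18
    rw [show ((18:ℕ)+1) = 19 by norm_num, c18] at h2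
    omega
  have c20 : Nat.choose 79 20 = 2651487106659130740 := by
    have h2 := Nat.choose_succ_right_eq 79 19
    rw [show ((19:ℕ)+1) = 20 by norm_num, c19] at h2
    omega
  have c21 : Nat.choose 79 21 = 7449416156804224460 := by
    have h2 := Nat.choose_succ_right_eq 79 20
    rw [show ((20:ℕ)+1) = 21 by norm_num, c20] at h2
    omega
  have c22 : Nat.choose 79 22 = 19639369867938409940 := by
    have h2 := Nat.choose_succ_right_eq 79 21
    rw [show ((21:ℕ)+1) = 22 by norm_num, c21] at h2
    omega
  have sy57 : Nat.choose 79 57 = 19639369867938409940 := by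
    have h := Nat.choose_symm (show (22:ℕ) ≤ 79 by norm_num)
    rw [show (79:ℕ) - 22 = 57 by norm_num] at h
    exact h.trans c22
  have sy58 : Nat.choose 79 58 = 7449416156804224460 := by
    have h := Nat.choose_symm (show (21:ℕ) ≤ 79 by norm_num)
    rw [show (79:ℕ) - 21 = 58 by norm_num] at h
    exact h.trans c21
  have sy59 : Nat.choose 79 59 = 2651487106659130740 := by
    have h := Nat.choose_symm (show (20:ℕ) ≤ 79 by norm_num)
    rw [show (79:ℕ) - 20 = 59 by norm_num] at h
    exact h.trans c20
  have sy60 : Nat.choose 79 60 = 883829035553043580 := by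
    have h := Nat.choose_symm (show (19:ℕ) ≤ 79 by norm_num)
    rw [show (79:ℕ) - 19 = 60 by norm_num] at h
    exact h.trans c19
  have sy61 : Nat.choose 79 61 = 275291011073898820 := by
    have h := Nat.choose_symm (show (18:ℕ) ≤ 79 by norm_num)
    rw [show (79:ℕ) - 18 = 61 by norm_num] at h
    exact h.trans c18
  have sy62 : Nat.choose 79 62 = 79923196763389980 := by
    have h := Nat.choose_symm (show (17:ℕ) ≤ 79 by norm_num)
    rw [show (79:ℕ) - 17 = 62 by norm_num] at h
    exact h.trans c17
  have sy63 : Nat.choose 79 63 = 21566576904406820 := by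
    have h := Nat.choose_symm (show (16:ℕ) ≤ 79 by norm_num)
    rw [show (79:ℕ) - 16 = 63 by norm_num] at h
    exact h.trans c16
  have sy64 : Nat.choose 79 64 = 5391644226101705 := by
    have h := Nat.choose_symm (show (15:ℕ) ≤ 79 by norm_num)
    rw [show (79:ℕ) - 15 = 64 by norm_num] at h
    exact h.trans c15
  have sy65 : Nat.choose 79 65 = 1244225590638855 := by
    have h := Nat.choose_symm (show (14:ℕ) ≤ 79 by norm_num)
    rw [show (79:ℕ) - 14 = 65 by norm_num] at h
    exact h.trans c14
  have sy66 : Nat.choose 79 66 = 263926640438545 := by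
    have h := Nat.choose_symm (show (13:ℕ) ≤ 79 by norm_num)
    rw [show (79:ℕ) - 13 = 66 by norm_num] at h
    exact h.trans c13
  have sy67 : Nat.choose 79 67 = 51209646652255 := by
    have h := Nat.choose_symm (show (12:ℕ) ≤ 79 by norm_num)
    rw [show (79:ℕ) - 12 = 67 by norm_num] at h
    exact h.trans c12
  have sy68 : Nat.choose 79 68 = 9036996468045 := by
    have h := Nat.choose_symm (show (11:ℕ) ≤ 79 by norm_num)
    rw [show (79:ℕ) - 11 = 68 by norm_num] at h
    exact h.trans c11
  have sy69 : Nat.choose 79 69 = 1440680596355 := by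
    have h := Nat.choose_symm (show (10:ℕ) ≤ 79 by norm_num)
    rw [show (79:ℕ) - 10 = 69 by norm_num] at h
    exact h.trans c10
  have sy70 : Nat.choose 79 70 = 205811513765 := by
    have h := Nat.choose_symm (show (9:ℕ) ≤ 79 by norm_num)
    rw [show (79:ℕ) - 9 = 70 by norm_num] at h
    exact h.trans c9
  have sy71 : Nat.choose 79 71 = 26088783435 := by
    have h := Nat.choose_symm (show (8:ℕ) ≤ 79 by norm_num)
    rw [show (79:ℕ) - 8 = 71 by norm_num] at h
    exact h.trans c8
  have sy72 : Nat.choose 79 72 = 2898753715 := by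
    have h := Nat.choose_symm (show (7:ℕ) ≤ 79 by norm_num)
    rw [show (79:ℕ) - 7 = 72 by norm_num] at h
    exact h.trans c7
  have sy73 : Nat.choose 79 73 = 277962685 := by
    have h := Nat.choose_symm (show (6:ℕ) ≤ 79 by norm_num)
    rw [show (79:ℕ) - 6 = 73 by norm_num] at h
    exact h.trans c6
  have sy74 : Nat.choose 79 74 = 22537515 := by
    have h := Nat.choose_symm (show (5:ℕ) ≤ 79 by norm_num)
    rw [show (79:ℕ) - 5 = 74 by norm_num] at h
    exact h.trans c5
  have sy75 : Nat.choose 79 75 = 1502501 := by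
    have h := Nat.choose_symm (show (4:ℕ) ≤ 79 by norm_num)
    rw [show (79:ℕ) - 4 = 75 by norm_num] at h
    exact h.trans c4
  have sy76 : Nat.choose 79 76 = 79079 := by
    have h := Nat.choose_symm (show (3:ℕ) ≤ 79 by norm_num)
    rw [show (79:ℕ) - 3 = 76 by norm_num] at h
    exact h.trans c3
  have sy77 : Nat.choose 79 77 = 3081 := by
    have h := Nat.choose_symm (show (2:ℕ) ≤ 79 by norm_num)
    rw [show (79:ℕ) - 2 = 77 by norm_num] at h
    exact h.trans c2
  have sy78 : Nat.choose 79 78 = 79 := by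
    have h := Nat.choose_symm (show (1:ℕ) ≤ 79 by norm_num)
    rw [show (79:ℕ) - 1 = 78 by norm_num] at h
    exact h.trans c1
  have sy79 : Nat.choose 79 79 = 1 := Nat.choose_self 79
  rw [Finset.sum_Icc_succ_top (by norm_num), Finset.sum_Icc_succ_top (by norm_num), Finset.sum_Icc_succ_top (by norm_num), Finset.sum_Icc_succ_top (by norm_num), Finset.sum_Icc_succ_top (by norm_num), Finset.sum_Icc_succ_top (by norm_num), Finset.sum_Icc_succ_top (by norm_num), Finset.sum_Icc_succ_top (by norm_num), Finset.sum_Icc_succ_top (by norm_num), Finset.sum_Icc_succ_top (by norm_num), Finset.sum_Icc_succ_top (by norm_num), Finset.sum_Icc_succ_top (by norm_num), Finset.sum_Icc_succ_top (by norm_num), Finset.sum_Icc_succ_top (by norm_num), Finset.sum_Icc_succ_top (by norm_num), Finset.sum_Icc_succ_top (by norm_num), Finset.sum_Icc_succ_top (by norm_num), Finset.sum_Icc_succ_top (by norm_num), Finset.sum_Icc_succ_top (by norm_num), Finset.sum_Icc_succ_top (by norm_num), Finset.sum_Icc_succ_top (by norm_num), Finset.sum_Icc_succ_top (by norm_nu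m),
    Finset.Icc_self, Finset.sum_singleton]
  rw [sy57, sy58, sy59, sy60, sy61, sy62, sy63, sy64, sy65, sy66, sy67, sy68, sy69, sy70, sy71, sy72, sy73, sy74, sy75, sy76, sy77, sy78, sy79]
  norm_num


set_option maxHeartbeats 2000000 in
theorem stmt8 (k : ℕ) (hk : 2 ≤ k) :
    (Set.ncard {n : ℕ | 2 ^ k ≤ n ∧ n < 2 ^ (k + 1) ∧
        5 * (k : ℝ) / 2 + Real.sqrt (k * Real.log k) < (cplx n : ℝ)} : ℝ)
      ≤ 2 / (k : ℝ) ^ 2 * 2 ^ k := by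
  rcases lt_or_ge k 183 with h | h
  · interval_cases k
    · exact small_cher 2 16 2 242 100 (by norm_num) (by norm_num) (by norm_num) (by norm_num) (by norm_num) (by norm_num) (by norm_num)
    · exact small_cher 3 25 3 474 100 (by norm_num) (by norm_num) (by norm_num) (by norm_num) (by norm_num) (by norm_num) (by norm_num)
    · exact small_cher 4 32 4 529 100 (by norm_num) (by norm_num) (by norm_num) (by norm_num) (by norm_num) (by norm_num) (by norm_num)
    · exact small_cher 5 37 5 484 100 (by norm_num) (by norm_num) (by norm_num) (by norm_num) (by norm_num) (by norm_num) (by norm_num)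
    · exact small_cher 6 41 6 425 100 (by norm_num) (by norm_num) (by norm_num) (by norm_num) (by norm_num) (by norm_num) (by norm_num)
    · exact small_cher 7 44 7 376 100 (by norm_num) (by norm_num) (by norm_num) (by norm_num) (by norm_num) (by norm_num) (by norm_num)
    · exact small_cher 8 48 8 337 100 (by norm_num) (by norm_num) (by norm_num) (by norm_num) (by norm_num) (by norm_num) (by norm_num)
    · exact small_exact 9 50 8 (by norm_num) (by norm_num) (by norm_num) (by norm_num) tail_9
    · exact small_exact 10 53 9 (by norm_num) (by norm_num) (by norm_num) (by norm_num) tail_10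
    · exact small_cher 11 55 10 567 100 (by norm_num) (by norm_num) (by norm_num) (by norm_num) (by norm_num) (by norm_num) (by norm_num)
    · exact small_cher 12 57 11 407 100 (by norm_num) (by norm_num) (by norm_num) (by norm_num) (by norm_num) (by norm_num) (by norm_num)
    · exact small_cher 13 59 12 341 100 (by norm_num) (by norm_num) (by norm_num) (by norm_num) (by norm_num) (by norm_num) (by norm_num)
    · exact small_cher 14 60 13 301 100 (by norm_num) (by norm_num) (by norm_num) (by norm_num) (by norm_num) (by norm_num) (by norm_num)
    · exact small_exact 15 62 13 (by norm_num) (by norm_num) (by norm_num) (by norm_num) tail_15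
    · exact small_cher 16 64 14 441 100 (by norm_num) (by norm_num) (by norm_num) (by norm_num) (by norm_num) (by norm_num) (by norm_num)
    · exact small_cher 17 65 15 344 100 (by norm_num) (by norm_num) (by norm_num) (by norm_num) (by norm_num) (by norm_num) (by norm_num)
    · exact small_cher 18 66 16 299 100 (by norm_num) (by norm_num) (by norm_num) (by norm_num) (by norm_num) (by norm_num) (by norm_num)
    · exact small_exact 19 67 16 (by norm_num) (by norm_num) (by norm_num) (by norm_num) tail_19
    · exact small_cher 20 69 17 427 100 (by norm_num) (by norm_num) (by norm_num) (by norm_num) (by norm_num) (by norm_num) (by norm_num)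
    · exact small_cher 21 70 18 327 100 (by norm_num) (by norm_num) (by norm_num) (by norm_num) (by norm_num) (by norm_num) (by norm_num)
    · exact small_cher 22 71 19 285 100 (by norm_num) (by norm_num) (by norm_num) (by norm_num) (by norm_num) (by norm_num) (by norm_num)
    · exact small_exact 23 72 19 (by norm_num) (by norm_num) (by norm_num) (by norm_num) tail_23
    · exact small_cher 24 73 20 371 100 (by norm_num) (by norm_num) (by norm_num) (by norm_num) (by norm_num) (by norm_num) (by norm_num)
    · exact small_cher 25 74 21 301 100 (by norm_num) (by norm_num) (by norm_num) (by norm_num) (by norm_num) (by norm_num) (by norm_num)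
    · exact small_cher 26 75 22 268 100 (by norm_num) (by norm_num) (by norm_num) (by norm_num) (by norm_num) (by norm_num) (by norm_num)
    · exact small_exact 27 76 22 (by norm_num) (by norm_num) (by norm_num) (by norm_num) tail_27
    · exact small_cher 28 76 23 319 100 (by norm_num) (by norm_num) (by norm_num) (by norm_num) (by norm_num) (by norm_num) (by norm_num)
    · exact small_cher 29 77 24 275 100 (by norm_num) (by norm_num) (by norm_num) (by norm_num) (by norm_num) (by norm_num) (by norm_num)
    · exact small_cher 30 78 25 250 100 (by norm_num) (by norm_num) (by norm_num) (by norm_num) (by norm_num) (by norm_num) (by norm_num)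
    · exact small_cher 31 79 25 348 100 (by norm_num) (by norm_num) (by norm_num) (by norm_num) (by norm_num) (by norm_num) (by norm_num)
    · exact small_cher 32 80 26 281 100 (by norm_num) (by norm_num) (by norm_num) (by norm_num) (by norm_num) (by norm_num) (by norm_num)
    · exact small_cher 33 80 27 253 100 (by norm_num) (by norm_num) (by norm_num) (by norm_num) (by norm_num) (by norm_num) (by norm_num)
    · exact small_exact 34 81 27 (by norm_num) (by norm_num) (by norm_num) (by norm_num) tail_34
    · exact small_cher 35 82 28 288 100 (by norm_num) (by norm_num) (by norm_num) (by norm_num) (by norm_num) (by norm_num) (by norm_num)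
    · exact small_cher 36 82 29 254 100 (by norm_num) (by norm_num) (by norm_num) (by norm_num) (by norm_num) (by norm_num) (by norm_num)
    · exact small_cher 37 83 30 234 100 (by norm_num) (by norm_num) (by norm_num) (by norm_num) (by norm_num) (by norm_num) (by norm_num)
    · exact small_cher 38 83 30 294 100 (by norm_num) (by norm_num) (by norm_num) (by norm_num) (by norm_num) (by norm_num) (by norm_num)
    · exact small_cher 39 84 31 255 100 (by norm_num) (by norm_num) (by norm_num) (by norm_num) (by norm_num) (by norm_num) (by norm_num)
    · exact small_cher 40 85 32 234 100 (by norm_num) (by norm_num) (by norm_num) (by norm_num) (by norm_num) (by norm_num) (by norm_num)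
    · exact small_cher 41 85 32 300 100 (by norm_num) (by norm_num) (by norm_num) (by norm_num) (by norm_num) (by norm_num) (by norm_num)
    · exact small_cher 42 86 33 255 100 (by norm_num) (by norm_num) (by norm_num) (by norm_num) (by norm_num) (by norm_num) (by norm_num)
    · exact small_cher 43 86 34 233 100 (by norm_num) (by norm_num) (by norm_num) (by norm_num) (by norm_num) (by norm_num) (by norm_num)
    · exact small_cher 44 87 34 308 100 (by norm_num) (by norm_num) (by norm_num) (by norm_num) (by norm_num) (by norm_num) (by norm_num)
    · exact small_cher 45 87 35 253 100 (by norm_num) (by norm_num) (by norm_num) (by norm_num) (by norm_num) (by norm_num) (by norm_num)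
    · exact small_cher 46 88 36 231 100 (by norm_num) (by norm_num) (by norm_num) (by norm_num) (by norm_num) (by norm_num) (by norm_num)
    · exact small_exact 47 88 36 (by norm_num) (by norm_num) (by norm_num) (by norm_num) tail_47
    · exact small_cher 48 89 37 251 100 (by norm_num) (by norm_num) (by norm_num) (by norm_num) (by norm_num) (by norm_num) (by norm_num)
    · exact small_cher 49 89 38 229 100 (by norm_num) (by norm_num) (by norm_num) (by norm_num) (by norm_num) (by norm_num) (by norm_num)
    · exact small_exact 50 90 38 (by norm_num) (by norm_num) (by norm_num) (by norm_num) tail_50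
    · exact small_cher 51 90 39 248 100 (by norm_num) (by norm_num) (by norm_num) (by norm_num) (by norm_num) (by norm_num) (by norm_num)
    · exact small_cher 52 91 40 227 100 (by norm_num) (by norm_num) (by norm_num) (by norm_num) (by norm_num) (by norm_num) (by norm_num)
    · exact small_exact 53 91 40 (by norm_num) (by norm_num) (by norm_num) (by norm_num) tail_53
    · exact small_cher 54 92 41 244 100 (by norm_num) (by norm_num) (by norm_num) (by norm_num) (by norm_num) (by norm_num) (by norm_num)
    · exact small_cher 55 92 42 224 100 (by norm_num) (by norm_num) (by norm_num) (by norm_num) (by norm_num) (by norm_num) (by norm_num)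
    · exact small_exact 56 92 42 (by norm_num) (by norm_num) (by norm_num) (by norm_num) tail_56
    · exact small_cher 57 93 43 240 100 (by norm_num) (by norm_num) (by norm_num) (by norm_num) (by norm_num) (by norm_num) (by norm_num)
    · exact small_cher 58 93 44 220 100 (by norm_num) (by norm_num) (by norm_num) (by norm_num) (by norm_num) (by norm_num) (by norm_num)
    · exact small_cher 59 94 45 208 100 (by norm_num) (by norm_num) (by norm_num) (by norm_num) (by norm_num) (by norm_num) (by norm_num)
    · exact small_cher 60 94 45 235 100 (by norm_num) (by norm_num) (by norm_num) (by norm_num) (by norm_num) (by norm_num) (by norm_num)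
    · exact small_cher 61 94 46 217 100 (by norm_num) (by norm_num) (by norm_num) (by norm_num) (by norm_num) (by norm_num) (by norm_num)
    · exact small_cher 62 95 46 276 100 (by norm_num) (by norm_num) (by norm_num) (by norm_num) (by norm_num) (by norm_num) (by norm_num)
    · exact small_cher 63 95 47 230 100 (by norm_num) (by norm_num) (by norm_num) (by norm_num) (by norm_num) (by norm_num) (by norm_num)
    · exact small_cher 64 96 48 213 100 (by norm_num) (by norm_num) (by norm_num) (by norm_num) (by norm_num) (by norm_num) (by norm_num)
    · exact small_cher 65 96 48 260 100 (by norm_num) (by norm_num) (by norm_num) (by norm_num) (by norm_num) (by norm_num) (by norm_num)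
    · exact small_cher 66 96 49 225 100 (by norm_num) (by norm_num) (by norm_num) (by norm_num) (by norm_num) (by norm_num) (by norm_num)
    · exact small_cher 67 97 50 210 100 (by norm_num) (by norm_num) (by norm_num) (by norm_num) (by norm_num) (by norm_num) (by norm_num)
    · exact small_cher 68 97 50 248 100 (by norm_num) (by norm_num) (by norm_num) (by norm_num) (by norm_num) (by norm_num) (by norm_num)
    · exact small_cher 69 97 51 220 100 (by norm_num) (by norm_num) (by norm_num) (by norm_num) (by norm_num) (by norm_num) (by norm_num)
    · exact small_cher 70 98 52 206 100 (by norm_num) (by norm_num) (by norm_num) (by norm_num) (by norm_num) (by norm_num) (by norm_num)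
    · exact small_cher 71 98 52 238 100 (by norm_num) (by norm_num) (by norm_num) (by norm_num) (by norm_num) (by norm_num) (by norm_num)
    · exact small_cher 72 98 53 215 100 (by norm_num) (by norm_num) (by norm_num) (by norm_num) (by norm_num) (by norm_num) (by norm_num)
    · exact small_cher 73 99 54 203 100 (by norm_num) (by norm_num) (by norm_num) (by norm_num) (by norm_num) (by norm_num) (by norm_num)
    · exact small_cher 74 99 54 230 100 (by norm_num) (by norm_num) (by norm_num) (by norm_num) (by norm_num) (by norm_num) (by norm_num)
    · exact small_cher 75 99 55 211 100 (by norm_num) (by norm_num) (by norm_num) (by norm_num) (by norm_num) (by norm_num) (by norm_num)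
    · exact small_cher 76 99 56 199 100 (by norm_num) (by norm_num) (by norm_num) (by norm_num) (by norm_num) (by norm_num) (by norm_num)
    · exact small_cher 77 100 56 223 100 (by norm_num) (by norm_num) (by norm_num) (by norm_num) (by norm_num) (by norm_num) (by norm_num)
    · exact small_cher 78 100 57 206 100 (by norm_num) (by norm_num) (by norm_num) (by norm_num) (by norm_num) (by norm_num) (by norm_num)
    · exact small_exact 79 100 57 (by norm_num) (by norm_num) (by norm_num) (by norm_num) tail_79
    · exact small_cher 80 101 58 216 100 (by norm_num) (by norm_num) (by norm_num) (by norm_num) (by norm_num) (by norm_num) (by norm_num)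
    · exact small_cher 81 101 59 202 100 (by norm_num) (by norm_num) (by norm_num) (by norm_num) (by norm_num) (by norm_num) (by norm_num)
    · exact small_cher 82 101 59 237 100 (by norm_num) (by norm_num) (by norm_num) (by norm_num) (by norm_num) (by norm_num) (by norm_num)
    · exact small_cher 83 102 60 211 100 (by norm_num) (by norm_num) (by norm_num) (by norm_num) (by norm_num) (by norm_num) (by norm_num)
    · exact small_cher 84 102 61 198 100 (by norm_num) (by norm_num) (by norm_num) (by norm_num) (by norm_num) (by norm_num) (by norm_num)
    · exact small_cher 85 102 61 225 100 (by norm_num) (by norm_num) (by norm_num) (by norm_num) (by norm_num) (by norm_num) (by norm_num)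
    · exact small_cher 86 102 62 206 100 (by norm_num) (by norm_num) (by norm_num) (by norm_num) (by norm_num) (by norm_num) (by norm_num)
    · exact small_cher 87 103 63 195 100 (by norm_num) (by norm_num) (by norm_num) (by norm_num) (by norm_num) (by norm_num) (by norm_num)
    · exact small_cher 88 103 63 216 100 (by norm_num) (by norm_num) (by norm_num) (by norm_num) (by norm_num) (by norm_num) (by norm_num)
    · exact small_cher 89 103 64 201 100 (by norm_num) (by norm_num) (by norm_num) (by norm_num) (by norm_num) (by norm_num) (by norm_num)
    · exact small_cher 90 103 65 191 100 (by norm_num) (by norm_num) (by norm_num) (by norm_num) (by norm_num) (by norm_num) (by norm_num)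
    · exact small_cher 91 104 65 210 100 (by norm_num) (by norm_num) (by norm_num) (by norm_num) (by norm_num) (by norm_num) (by norm_num)
    · exact small_cher 92 104 66 197 100 (by norm_num) (by norm_num) (by norm_num) (by norm_num) (by norm_num) (by norm_num) (by norm_num)
    · exact small_cher 93 104 66 226 100 (by norm_num) (by norm_num) (by norm_num) (by norm_num) (by norm_num) (by norm_num) (by norm_num)
    · exact small_cher 94 104 67 204 100 (by norm_num) (by norm_num) (by norm_num) (by norm_num) (by norm_num) (by norm_num) (by norm_num)
    · exact small_cher 95 105 68 193 100 (by norm_num) (by norm_num) (by norm_num) (by norm_num) (by norm_num) (by norm_num) (by norm_num)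
    · exact small_cher 96 105 68 215 100 (by norm_num) (by norm_num) (by norm_num) (by norm_num) (by norm_num) (by norm_num) (by norm_num)
    · exact small_cher 97 105 69 199 100 (by norm_num) (by norm_num) (by norm_num) (by norm_num) (by norm_num) (by norm_num) (by norm_num)
    · exact small_cher 98 105 70 189 100 (by norm_num) (by norm_num) (by norm_num) (by norm_num) (by norm_num) (by norm_num) (by norm_num)
    · exact small_cher 99 106 70 207 100 (by norm_num) (by norm_num) (by norm_num) (by norm_num) (by norm_num) (by norm_num) (by norm_num)
    · exact small_cher 100 106 71 194 100 (by norm_num) (by norm_num) (by norm_num) (by norm_num) (by norm_num) (by norm_num) (by norm_num)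
    · exact small_cher 101 106 72 186 100 (by norm_num) (by norm_num) (by norm_num) (by norm_num) (by norm_num) (by norm_num) (by norm_num)
    · exact small_cher 102 106 72 201 100 (by norm_num) (by norm_num) (by norm_num) (by norm_num) (by norm_num) (by norm_num) (by norm_num)
    · exact small_cher 103 106 73 190 100 (by norm_num) (by norm_num) (by norm_num) (by norm_num) (by norm_num) (by norm_num) (by norm_num)
    · exact small_cher 104 107 73 212 100 (by norm_num) (by norm_num) (by norm_num) (by norm_num) (by norm_num) (by norm_num) (by norm_num)
    · exact small_cher 105 107 74 196 100 (by norm_num) (by norm_num) (by norm_num) (by norm_num) (by norm_num) (by norm_num) (by norm_num)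
    · exact small_cher 106 107 75 187 100 (by norm_num) (by norm_num) (by norm_num) (by norm_num) (by norm_num) (by norm_num) (by norm_num)
    · exact small_cher 107 107 75 203 100 (by norm_num) (by norm_num) (by norm_num) (by norm_num) (by norm_num) (by norm_num) (by norm_num)
    · exact small_cher 108 108 76 191 100 (by norm_num) (by norm_num) (by norm_num) (by norm_num) (by norm_num) (by norm_num) (by norm_num)
    · exact small_cher 109 108 77 183 100 (by norm_num) (by norm_num) (by norm_num) (by norm_num) (by norm_num) (by norm_num) (by norm_num)
    · exact small_cher 110 108 77 197 100 (by norm_num) (by norm_num) (by norm_num) (by norm_num) (by norm_num) (by norm_num) (by norm_num)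
    · exact small_cher 111 108 78 187 100 (by norm_num) (by norm_num) (by norm_num) (by norm_num) (by norm_num) (by norm_num) (by norm_num)
    · exact small_cher 112 108 78 207 100 (by norm_num) (by norm_num) (by norm_num) (by norm_num) (by norm_num) (by norm_num) (by norm_num)
    · exact small_cher 113 109 79 192 100 (by norm_num) (by norm_num) (by norm_num) (by norm_num) (by norm_num) (by norm_num) (by norm_num)
    · exact small_cher 114 109 80 184 100 (by norm_num) (by norm_num) (by norm_num) (by norm_num) (by norm_num) (by norm_num) (by norm_num)
    · exact small_cher 115 109 80 199 100 (by norm_num) (by norm_num) (by norm_num) (by norm_num) (by norm_num) (by norm_num) (by norm_num)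
    · exact small_cher 116 109 81 188 100 (by norm_num) (by norm_num) (by norm_num) (by norm_num) (by norm_num) (by norm_num) (by norm_num)
    · exact small_cher 117 109 82 180 100 (by norm_num) (by norm_num) (by norm_num) (by norm_num) (by norm_num) (by norm_num) (by norm_num)
    · exact small_cher 118 110 82 193 100 (by norm_num) (by norm_num) (by norm_num) (by norm_num) (by norm_num) (by norm_num) (by norm_num)
    · exact small_cher 119 110 83 184 100 (by norm_num) (by norm_num) (by norm_num) (by norm_num) (by norm_num) (by norm_num) (by norm_num)
    · exact small_cher 120 110 83 201 100 (by norm_num) (by norm_num) (by norm_num) (by norm_num) (by norm_num) (by norm_num) (by norm_num)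
    · exact small_cher 121 110 84 188 100 (by norm_num) (by norm_num) (by norm_num) (by norm_num) (by norm_num) (by norm_num) (by norm_num)
    · exact small_cher 122 110 85 181 100 (by norm_num) (by norm_num) (by norm_num) (by norm_num) (by norm_num) (by norm_num) (by norm_num)
    · exact small_cher 123 111 85 194 100 (by norm_num) (by norm_num) (by norm_num) (by norm_num) (by norm_num) (by norm_num) (by norm_num)
    · exact small_cher 124 111 86 184 100 (by norm_num) (by norm_num) (by norm_num) (by norm_num) (by norm_num) (by norm_num) (by norm_num)
    · exact small_cher 125 111 87 178 100 (by norm_num) (by norm_num) (by norm_num) (by norm_num) (by norm_num) (by norm_num) (by norm_num)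
    · exact small_cher 126 111 87 189 100 (by norm_num) (by norm_num) (by norm_num) (by norm_num) (by norm_num) (by norm_num) (by norm_num)
    · exact small_cher 127 111 88 181 100 (by norm_num) (by norm_num) (by norm_num) (by norm_num) (by norm_num) (by norm_num) (by norm_num)
    · exact small_cher 128 112 88 195 100 (by norm_num) (by norm_num) (by norm_num) (by norm_num) (by norm_num) (by norm_num) (by norm_num)
    · exact small_cher 129 112 89 184 100 (by norm_num) (by norm_num) (by norm_num) (by norm_num) (by norm_num) (by norm_num) (by norm_num)
    · exact small_cher 130 112 90 177 100 (by norm_num) (by norm_num) (by norm_num) (by norm_num) (by norm_num) (by norm_num) (by norm_num)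
    · exact small_cher 131 112 90 189 100 (by norm_num) (by norm_num) (by norm_num) (by norm_num) (by norm_num) (by norm_num) (by norm_num)
    · exact small_cher 132 112 91 180 100 (by norm_num) (by norm_num) (by norm_num) (by norm_num) (by norm_num) (by norm_num) (by norm_num)
    · exact small_cher 133 112 91 196 100 (by norm_num) (by norm_num) (by norm_num) (by norm_num) (by norm_num) (by norm_num) (by norm_num)
    · exact small_cher 134 113 92 184 100 (by norm_num) (by norm_num) (by norm_num) (by norm_num) (by norm_num) (by norm_num) (by norm_num)
    · exact small_cher 135 113 93 177 100 (by norm_num) (by norm_num) (by norm_num) (by norm_num) (by norm_num) (by norm_num) (by norm_num)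
    · exact small_cher 136 113 93 189 100 (by norm_num) (by norm_num) (by norm_num) (by norm_num) (by norm_num) (by norm_num) (by norm_num)
    · exact small_cher 137 113 94 180 100 (by norm_num) (by norm_num) (by norm_num) (by norm_num) (by norm_num) (by norm_num) (by norm_num)
    · exact small_cher 138 113 94 197 100 (by norm_num) (by norm_num) (by norm_num) (by norm_num) (by norm_num) (by norm_num) (by norm_num)
    · exact small_cher 139 113 95 184 100 (by norm_num) (by norm_num) (by norm_num) (by norm_num) (by norm_num) (by norm_num) (by norm_num)
    · exact small_cher 140 114 96 177 100 (by norm_num) (by norm_num) (by norm_num) (by norm_num) (by norm_num) (by norm_num) (by norm_num)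
    · exact small_cher 141 114 96 189 100 (by norm_num) (by norm_num) (by norm_num) (by norm_num) (by norm_num) (by norm_num) (by norm_num)
    · exact small_cher 142 114 97 180 100 (by norm_num) (by norm_num) (by norm_num) (by norm_num) (by norm_num) (by norm_num) (by norm_num)
    · exact small_cher 143 114 98 174 100 (by norm_num) (by norm_num) (by norm_num) (by norm_num) (by norm_num) (by norm_num) (by norm_num)
    · exact small_cher 144 114 98 184 100 (by norm_num) (by norm_num) (by norm_num) (by norm_num) (by norm_num) (by norm_num) (by norm_num)
    · exact small_cher 145 114 99 176 100 (by norm_num) (by norm_num) (by norm_num) (by norm_num) (by norm_num) (by norm_num) (by norm_num)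
    · exact small_cher 146 115 99 189 100 (by norm_num) (by norm_num) (by norm_num) (by norm_num) (by norm_num) (by norm_num) (by norm_num)
    · exact small_cher 147 115 100 180 100 (by norm_num) (by norm_num) (by norm_num) (by norm_num) (by norm_num) (by norm_num) (by norm_num)
    · exact small_cher 148 115 101 173 100 (by norm_num) (by norm_num) (by norm_num) (by norm_num) (by norm_num) (by norm_num) (by norm_num)
    · exact small_cher 149 115 101 184 100 (by norm_num) (by norm_num) (by norm_num) (by norm_num) (by norm_num) (by norm_num) (by norm_num)
    · exact small_cher 150 115 102 176 100 (by norm_num) (by norm_num) (by norm_num) (by norm_num) (by norm_num) (by norm_num) (by norm_num)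
    · exact small_cher 151 115 102 189 100 (by norm_num) (by norm_num) (by norm_num) (by norm_num) (by norm_num) (by norm_num) (by norm_num)
    · exact small_cher 152 115 103 179 100 (by norm_num) (by norm_num) (by norm_num) (by norm_num) (by norm_num) (by norm_num) (by norm_num)
    · exact small_cher 153 116 104 173 100 (by norm_num) (by norm_num) (by norm_num) (by norm_num) (by norm_num) (by norm_num) (by norm_num)
    · exact small_cher 154 116 104 183 100 (by norm_num) (by norm_num) (by norm_num) (by norm_num) (by norm_num) (by norm_num) (by norm_num)
    · exact small_cher 155 116 105 175 100 (by norm_num) (by norm_num) (by norm_num) (by norm_num) (by norm_num) (by norm_num) (by norm_num)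
    · exact small_cher 156 116 105 189 100 (by norm_num) (by norm_num) (by norm_num) (by norm_num) (by norm_num) (by norm_num) (by norm_num)
    · exact small_cher 157 116 106 178 100 (by norm_num) (by norm_num) (by norm_num) (by norm_num) (by norm_num) (by norm_num) (by norm_num)
    · exact small_cher 158 116 107 172 100 (by norm_num) (by norm_num) (by norm_num) (by norm_num) (by norm_num) (by norm_num) (by norm_num)
    · exact small_cher 159 117 107 182 100 (by norm_num) (by norm_num) (by norm_num) (by norm_num) (by norm_num) (by norm_num) (by norm_num)
    · exact small_cher 160 117 108 175 100 (by norm_num) (by norm_num) (by norm_num) (by norm_num) (by norm_num) (by norm_num) (by norm_num)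
    · exact small_cher 161 117 109 169 100 (by norm_num) (by norm_num) (by norm_num) (by norm_num) (by norm_num) (by norm_num) (by norm_num)
    · exact small_cher 162 117 109 178 100 (by norm_num) (by norm_num) (by norm_num) (by norm_num) (by norm_num) (by norm_num) (by norm_num)
    · exact small_cher 163 117 110 171 100 (by norm_num) (by norm_num) (by norm_num) (by norm_num) (by norm_num) (by norm_num) (by norm_num)
    · exact small_cher 164 117 110 182 100 (by norm_num) (by norm_num) (by norm_num) (by norm_num) (by norm_num) (by norm_num) (by norm_num)
    · exact small_cher 165 117 111 174 100 (by norm_num) (by norm_num) (by norm_num) (by norm_num) (by norm_num) (by norm_num) (by norm_num)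
    · exact small_cher 166 118 112 169 100 (by norm_num) (by norm_num) (by norm_num) (by norm_num) (by norm_num) (by norm_num) (by norm_num)
    · exact small_cher 167 118 112 177 100 (by norm_num) (by norm_num) (by norm_num) (by norm_num) (by norm_num) (by norm_num) (by norm_num)
    · exact small_cher 168 118 113 171 100 (by norm_num) (by norm_num) (by norm_num) (by norm_num) (by norm_num) (by norm_num) (by norm_num)
    · exact small_cher 169 118 113 181 100 (by norm_num) (by norm_num) (by norm_num) (by norm_num) (by norm_num) (by norm_num) (by norm_num)
    · exact small_cher 170 118 114 173 100 (by norm_num) (by norm_num) (by norm_num) (by norm_num) (by norm_num) (by norm_num) (by norm_num)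
    · exact small_cher 171 118 115 168 100 (by norm_num) (by norm_num) (by norm_num) (by norm_num) (by norm_num) (by norm_num) (by norm_num)
    · exact small_cher 172 118 115 176 100 (by norm_num) (by norm_num) (by norm_num) (by norm_num) (by norm_num) (by norm_num) (by norm_num)
    · exact small_cher 173 118 116 170 100 (by norm_num) (by norm_num) (by norm_num) (by norm_num) (by norm_num) (by norm_num) (by norm_num)
    · exact small_cher 174 119 116 180 100 (by norm_num) (by norm_num) (by norm_num) (by norm_num) (by norm_num) (by norm_num) (by norm_num)
    · exact small_cher 175 119 117 172 100 (by norm_num) (by norm_num) (by norm_num) (by norm_num) (by norm_num) (by norm_num) (by norm_num)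
    · exact small_cher 176 119 118 167 100 (by norm_num) (by norm_num) (by norm_num) (by norm_num) (by norm_num) (by norm_num) (by norm_num)
    · exact small_cher 177 119 118 175 100 (by norm_num) (by norm_num) (by norm_num) (by norm_num) (by norm_num) (by norm_num) (by norm_num)
    · exact small_cher 178 119 119 169 100 (by norm_num) (by norm_num) (by norm_num) (by norm_num) (by norm_num) (by norm_num) (by norm_num)
    · exact small_cher 179 119 119 179 100 (by norm_num) (by norm_num) (by norm_num) (by norm_num) (by norm_num) (by norm_num) (by norm_num)
    · exact small_cher 180 119 120 171 100 (by norm_num) (by norm_num) (by norm_num) (by norm_num) (by norm_num) (by norm_num) (by norm_num)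
    · exact small_cher 181 119 121 166 100 (by norm_num) (by norm_num) (by norm_num) (by norm_num) (by norm_num) (by norm_num) (by norm_num)
    · exact small_cher 182 120 121 174 100 (by norm_num) (by norm_num) (by norm_num) (by norm_num) (by norm_num) (by norm_num) (by norm_num)
  · exact large_case k h
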